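/- arXiv:1306.5859 — 12 statements merged into one kernel-verified Lean document; each statement's English description precedes it below -/
import Mathlib

section
/- Let X be a metric space, let α ≥ 0 and C > 0. Assume that for every x ∈ X and all radii 0 < r < R, the ball B(x,R) can be covered by at most C(R/r)^α balls of radius r with centers in X. Then the Nagata dimension of X is at most ⌊α⌋: there exists a constant c ∈ (0,1) such that for every s > 0 the space X admits a cover 𝒰 = ⋃_{k=0}^{⌊α⌋} 𝒰_k in which every member has diameter at most s and each family 𝒰_k is cs-separated. In particular, the Nagata dimension of a metric space is at most its Assouad dimension. -/
open Metric Set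

/-- The set `A` in a space with distance function `d` has Nagata dimension at most `n`
with constant `c` at scale `s` (written `dim_N(A,c,s) ≤ n` in the paper): there is a
cover `𝒰 = ⋃_{k=0}^n 𝒰 k` of `A` by subsets of `A`, each member having diameter at
most `s`, such that each family `𝒰 k` is `c*s`-separated. -/
def dimNle {X : Type*} (d : X → X → ℝ) (A : Set X) (c s : ℝ) (n : ℕ) : Prop :=
  ∃ 𝒰 : Fin (n + 1) → Set (Set X),
    (∀ k, ∀ U ∈ 𝒰 k, U ⊆ A) ∧
    (∀ p ∈ A, ∃ k, ∃ U ∈ 𝒰 k, p ∈ U) ∧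
    (∀ k, ∀ U ∈ 𝒰 k, ∀ a ∈ U, ∀ b ∈ U, d a b ≤ s) ∧
    (∀ k, ∀ U ∈ 𝒰 k, ∀ V ∈ 𝒰 k, U ≠ V → ∀ a ∈ U, ∀ b ∈ V, c * s ≤ d a b)

/-- `dimAle d A C Rbar β` (written `dim_A(A,C,Rbar) ≤ β` in the paper): for all
`0 < r < R < Rbar` and every `x ∈ A`, the ball of radius `R` around `x` in `A` can be
covered by at most `C * (R/r)^β` balls of radius `r` with centers in `A`. -/
def dimAle {X : Type*} (d : X → X → ℝ) (A : Set X) (C Rbar β : ℝ) : Prop :=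
  ∀ r R : ℝ, 0 < r → r < R → R < Rbar → ∀ x ∈ A,
    ∃ T : Finset X, ↑T ⊆ A ∧ (T.card : ℝ) ≤ C * (R / r) ^ β ∧
      ∀ z ∈ A, d z x < R → ∃ t ∈ T, d z t < r

/-- `d` is a metric distance function on `Y`: symmetric, triangle inequality, and
vanishing exactly on the diagonal. -/
def IsMetricDist {Y : Type*} (d : Y → Y → ℝ) : Prop :=
  (∀ a b, d a b = d b a) ∧ (∀ a b c, d a c ≤ d a b + d b c) ∧ (∀ a b, d a b = 0 ↔ a = b)

/-- An `ε`-coupling between the pointed spaces `(A, dA, a₀)` and `(B, dB, b₀)`: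
a pseudometric on the disjoint union extending `dA` and `dB`, with `d(a₀,b₀) ≤ ε`,
every point of `B_A(a₀,1/ε)` within distance `< ε` of a point of `B`, and every point
of `B_B(b₀,1/ε)` within distance `< ε` of a point of `A`. -/
def IsCoupling {A B : Type*} (dA : A → A → ℝ) (dB : B → B → ℝ) (a₀ : A) (b₀ : B)
    (ε : ℝ) (d : A ⊕ B → A ⊕ B → ℝ) : Prop :=
  (∀ p q, d p q = d q p) ∧
  (∀ p, d p p = 0) ∧
  (∀ p q r, d p r ≤ d p q + d q r) ∧
  (∀ u v : A, d (Sum.inl u) (Sum.inl v) = dA u v) ∧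
  (∀ u v : B, d (Sum.inr u) (Sum.inr v) = dB u v) ∧
  d (Sum.inl a₀) (Sum.inr b₀) ≤ ε ∧
  (∀ u : A, dA u a₀ < 1 / ε → ∃ v : B, d (Sum.inl u) (Sum.inr v) < ε) ∧
  (∀ v : B, dB v b₀ < 1 / ε → ∃ u : A, d (Sum.inl u) (Sum.inr v) < ε)

open scoped Function
open Filter Topology

/-!
Fix a maximal `cs`-separated net `Y` of `X` and measure a set `S` by the number of points of `Y`
in a ball of radius `2s` that lie `cs`-close to `S`; by the covering bound this is at most
`C (4/c)^α` for `S = X`. Around an `s/4`-net of `S`, carve balls of radii in `[s/4, s/2]` greedily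
along a well-order of `X`: the pieces are `s`-bounded and `cs`-separated, and every point of `S`
left over lies in a thin shell around some centre. Choosing each radius among `m ≈ 1/(12c)`
disjoint annuli by pigeonhole, the net points near the leftover set number at most `C 24^α / m`
times the previous count. After `⌊α⌋ + 1` rounds the count is `O(c^(⌊α⌋ + 1 - α)) < 1` for small
`c`, so nothing is left.
-/

structure IsSeparatedFamily {X : Type*} (d : X → X → ℝ) (A : Set X) (s t : ℝ)
    (𝒱 : Set (Set X)) : Prop where
  subset : ∀ U ∈ 𝒱, U ⊆ A
  dist_le : ∀ U ∈ 𝒱, ∀ a ∈ U, ∀ b ∈ U, d a b ≤ s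
  le_dist : ∀ U ∈ 𝒱, ∀ V ∈ 𝒱, U ≠ V → ∀ a ∈ U, ∀ b ∈ V, t ≤ d a b

section dimNle

variable {X : Type*} {d : X → X → ℝ} {A : Set X} {c s : ℝ} {𝒱 : Set (Set X)}

theorem dimNle_zero_of_subset_sUnion (h𝒱 : IsSeparatedFamily d A s (c * s) 𝒱)
    (hA : A ⊆ ⋃₀ 𝒱) : dimNle d A c s 0 :=
  ⟨fun _ => 𝒱, fun _ => h𝒱.subset, fun _ hp => ⟨0, hA hp⟩, fun _ => h𝒱.dist_le,
    fun _ => h𝒱.le_dist⟩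

theorem dimNle_succ_of_diff_sUnion {n : ℕ} (h𝒱 : IsSeparatedFamily d A s (c * s) 𝒱)
    (h : dimNle d (A \ ⋃₀ 𝒱) c s n) : dimNle d A c s (n + 1) := by
  obtain ⟨𝒰, hsub, hcov, hdiam, hsep⟩ := h
  refine ⟨Fin.cons 𝒱 𝒰, Fin.cases h𝒱.subset fun k U hU => (hsub k U hU).trans sdiff_subset,
    fun p hp => ?_, Fin.cases h𝒱.dist_le hdiam, Fin.cases h𝒱.le_dist hsep⟩
  by_cases hp𝒱 : p ∈ ⋃₀ 𝒱
  · exact ⟨0, hp𝒱⟩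
  · obtain ⟨k, hk⟩ := hcov p ⟨hp, hp𝒱⟩
    exact ⟨k.succ, hk⟩

end dimNle

theorem exists_lt_ncard_inter_le {ι : Type*} {F : Set ι} (hF : F.Finite) {m : ℕ} (hm : 0 < m)
    {W : ℕ → Set ι} (hW : Pairwise (Disjoint on W)) :
    ∃ k < m, ((F ∩ W k).ncard : ℝ) ≤ F.ncard / m := by
  have hsum : ∑ k ∈ Finset.range m, ((F ∩ W k).ncard : ℝ) ≤
      ∑ _k ∈ Finset.range m, (F.ncard / m : ℝ) := by
    have hdisj : ((Finset.range m : Set ℕ)).PairwiseDisjoint (fun k => F ∩ W k) :=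
      fun k _ l _ hkl => (hW hkl).mono inter_subset_right inter_subset_right
    have hunion := (Finset.range m).finite_toSet.ncard_biUnion
      (fun k _ => hF.inter_of_left (W k)) hdisj
    rw [finsum_mem_coe_finset] at hunion
    have hle : (⋃ k ∈ (Finset.range m : Set ℕ), F ∩ W k).ncard ≤ F.ncard :=
      ncard_le_ncard (iUnion₂_subset fun _ _ => inter_subset_left) hF
    rw [Finset.sum_const, Finset.card_range, nsmul_eq_mul, mul_div_cancel₀ _ (by positivity)]
    exact_mod_cast hunion ▸ hle
  obtain ⟨k, hk, hle⟩ := Finset.exists_le_of_sum_le (Finset.nonempty_range_iff.2 hm.ne') hsum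
  exact ⟨k, Finset.mem_range.1 hk, hle⟩

theorem ncard_le_ncard_mul_of_subset_biUnion {ι κ : Type*} {I : Set ι} (hI : I.Finite)
    {G : ι → Set κ} (hG : ∀ i ∈ I, (G i).Finite) {F : Set κ} (hF : F ⊆ ⋃ i ∈ I, G i) {b : ℝ}
    (hb : ∀ i ∈ I, ((G i).ncard : ℝ) ≤ b) : (F.ncard : ℝ) ≤ I.ncard * b := by
  rw [← hI.coe_toFinset] at hF
  have hfin := hI.toFinset.finite_toSet.biUnion fun i hi => hG i (hI.mem_toFinset.1 hi)
  calc (F.ncard : ℝ) ≤ ∑ i ∈ hI.toFinset, ((G i).ncard : ℝ) := by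
        exact_mod_cast (ncard_le_ncard hF hfin).trans (hI.toFinset.set_ncard_biUnion_le _)
    _ ≤ I.ncard * b := by
        rw [ncard_eq_toFinset_card _ hI, ← nsmul_eq_mul]
        exact Finset.sum_le_card_nsmul _ _ _ fun i hi => hb i (hI.mem_toFinset.1 hi)


section Metric

variable {X : Type*} [PseudoMetricSpace X]

theorem exists_pairwise_le_dist_net (S : Set X) {t : ℝ} (ht : 0 < t) :
    ∃ N ⊆ S, N.Pairwise (t ≤ dist · ·) ∧ ∀ p ∈ S, ∃ z ∈ N, dist p z < t := by
  obtain ⟨N, ⟨hNS, hN⟩, hmax⟩ := zorn_subset {N | N ⊆ S ∧ N.Pairwise (t ≤ dist · ·)}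
    fun 𝒞 h𝒞 hchain => ⟨⋃₀ 𝒞, ⟨sUnion_subset fun N hN => (h𝒞 hN).1,
      (pairwise_sUnion hchain.directedOn).2 fun N hN => (h𝒞 hN).2⟩,
      fun _ => subset_sUnion_of_mem⟩
  refine ⟨N, hNS, hN, fun p hp => ?_⟩
  by_contra! hfar
  have hpN : p ∉ N := fun hpN => (hfar p hpN).not_gt (by simpa using ht)
  have hins : insert p N ∈ {N | N ⊆ S ∧ N.Pairwise (t ≤ dist · ·)} :=
    ⟨insert_subset hp hNS, hN.insert fun z hz _ => ⟨hfar z hz, dist_comm p z ▸ hfar z hz⟩⟩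
  exact hpN (hmax hins (subset_insert p N) (mem_insert p N))

theorem pairwise_disjoint_annuli (z : X) (a : ℝ) {δ : ℝ} (hδ : 0 < δ) :
    Pairwise (Disjoint on fun k : ℕ =>
      {y | a + 3 * k * δ - δ < dist y z ∧ dist y z < a + 3 * k * δ + 2 * δ}) := by
  intro k l hkl
  rw [Function.onFun, Set.disjoint_left]
  rintro y ⟨hk₁, hk₂⟩ ⟨hl₁, hl₂⟩
  rcases hkl.lt_or_gt with h | h
  · have : (k : ℝ) + 1 ≤ l := by exact_mod_cast h
    nlinarith
  · have : (l : ℝ) + 1 ≤ k := by exact_mod_cast h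
    nlinarith

theorem eq_empty_of_ncard_inter_thickening_eq_zero {Y S : Set X} {r δ : ℝ} (hδr : δ ≤ r)
    (hfin : ∀ x, (Y ∩ ball x r).Finite) (hnet : ∀ p, ∃ y ∈ Y, dist p y < δ)
    (h : ∀ x, (Y ∩ ball x r ∩ thickening δ S).ncard = 0) : S = ∅ := by
  refine eq_empty_iff_forall_notMem.2 fun p hp => ?_
  obtain ⟨y, hy, hpy⟩ := hnet p
  have hmem : y ∈ Y ∩ ball p r ∩ thickening δ S :=
    ⟨⟨hy, mem_ball'.2 (hpy.trans_le hδr)⟩, mem_thickening_iff.2 ⟨p, hp, dist_comm p y ▸ hpy⟩⟩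
  have hempty := (ncard_eq_zero ((hfin p).subset inter_subset_left)).1 (h p)
  exact hempty.subset hmem

end Metric

namespace dimAle

variable {X : Type*} [PseudoMetricSpace X] {C Rbar α t R : ℝ} {Y : Set X}

theorem exists_injOn_finset (h : dimAle (dist : X → X → ℝ) univ C Rbar α) (x : X)
    (ht : 0 < t) (htR : t ≤ R) (hR : R < Rbar) (hY : Y.Pairwise (t ≤ dist · ·)) :
    ∃ T : Finset X, (T.card : ℝ) ≤ C * (2 * R / t) ^ α ∧
      ∃ f : X → X, MapsTo f (Y ∩ ball x R) T ∧ InjOn f (Y ∩ ball x R) := by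
  obtain ⟨T, -, hT, hcov⟩ := h (t / 2) R (by positivity) (by linarith) hR x (mem_univ x)
  have hf : ∀ p ∈ Y ∩ ball x R, ∃ u ∈ T, dist p u < t / 2 :=
    fun p hp => hcov p (mem_univ p) hp.2
  choose! f hfT hfd using hf
  refine ⟨T, by rwa [div_div_eq_mul_div, mul_comm R] at hT, f, hfT, fun a ha b hb hab => ?_⟩
  by_contra hne
  linarith [hY ha.1 hb.1 hne, hfd a ha, hab ▸ hfd b hb, dist_triangle_right a b (f a)]

theorem finite_inter_ball (h : dimAle (dist : X → X → ℝ) univ C Rbar α) (x : X)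
    (ht : 0 < t) (htR : t ≤ R) (hR : R < Rbar) (hY : Y.Pairwise (t ≤ dist · ·)) :
    (Y ∩ ball x R).Finite :=
  let ⟨T, _, _, hf, hinj⟩ := h.exists_injOn_finset x ht htR hR hY
  Finite.of_injOn hf hinj T.finite_toSet

theorem ncard_inter_ball_le (h : dimAle (dist : X → X → ℝ) univ C Rbar α) (x : X)
    (ht : 0 < t) (htR : t ≤ R) (hR : R < Rbar) (hY : Y.Pairwise (t ≤ dist · ·)) :
    ((Y ∩ ball x R).ncard : ℝ) ≤ C * (2 * R / t) ^ α := by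
  obtain ⟨T, hT, f, hf, hinj⟩ := h.exists_injOn_finset x ht htR hR hY
  have := ncard_le_ncard_of_injOn f hf hinj T.finite_toSet
  rw [ncard_coe_finset] at this
  exact (Nat.cast_le.2 this).trans hT

end dimAle

section Carving

variable {X : Type*} [PseudoMetricSpace X] {S Z : Set X} {ρ : X → ℝ} {t : ℝ}

def carvedPiece (S Z : Set X) (ρ : X → ℝ) (t : ℝ) (z : X) : Set X :=
  {p ∈ S | dist p z ≤ ρ z ∧ ∀ w ∈ Z, WellOrderingRel w z → ρ w + t ≤ dist p w}

theorem carvedPiece_subset (z : X) : carvedPiece S Z ρ t z ⊆ S := fun _ hp => hp.1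

theorem dist_le_of_mem_carvedPiece {z a b : X} (ha : a ∈ carvedPiece S Z ρ t z)
    (hb : b ∈ carvedPiece S Z ρ t z) : dist a b ≤ 2 * ρ z := by
  linarith [dist_triangle_right a b z, ha.2.1, hb.2.1]

theorem le_dist_of_mem_carvedPiece {z w a b : X} (hz : z ∈ Z) (hw : w ∈ Z) (hzw : z ≠ w)
    (ha : a ∈ carvedPiece S Z ρ t z) (hb : b ∈ carvedPiece S Z ρ t w) : t ≤ dist a b := by
  rcases trichotomous_of WellOrderingRel z w with h | rfl | h
  · linarith [dist_triangle_left b z a, ha.2.1, hb.2.2 z hz h]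
  · exact absurd rfl hzw
  · linarith [dist_triangle a b w, hb.2.1, ha.2.2 w hw h]

theorem exists_shell_of_notMem_carvedPiece {p : X} (hp : p ∈ S)
    (hnot : ∀ z ∈ Z, p ∉ carvedPiece S Z ρ t z) (hnear : ∃ z ∈ Z, dist p z < ρ z + t) :
    ∃ z ∈ Z, ρ z < dist p z ∧ dist p z < ρ z + t := by
  let Q := {z | z ∈ Z ∧ dist p z < ρ z + t}
  have hwf : WellFounded (@WellOrderingRel X) := IsWellFounded.wf
  obtain ⟨hz, hzt⟩ : hwf.min Q hnear ∈ Q := hwf.min_mem Q hnear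
  refine ⟨_, hz, not_le.1 fun hle => hnot _ hz ⟨hp, hle, fun w hw hwz => ?_⟩, hzt⟩
  by_contra! hlt
  exact hwf.not_lt_min Q ⟨hw, hlt⟩ hwz

theorem exists_near_sphere_of_mem_thickening_sdiff {δ : ℝ}
    (hnear : ∀ p ∈ S, ∃ z ∈ Z, dist p z < ρ z + t) {y : X}
    (hy : y ∈ thickening δ (S \ ⋃₀ (carvedPiece S Z ρ t '' Z))) :
    ∃ z ∈ Z, y ∈ thickening δ S ∧ ρ z - δ < dist y z ∧ dist y z < ρ z + t + δ := by
  obtain ⟨p, ⟨hpS, hpU⟩, hyp⟩ := mem_thickening_iff.1 hy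
  obtain ⟨z, hz, hlo, hhi⟩ := exists_shell_of_notMem_carvedPiece hpS
    (fun z hz hpz => hpU ⟨_, mem_image_of_mem _ hz, hpz⟩) (hnear p hpS)
  refine ⟨z, hz, mem_thickening_iff.2 ⟨p, hpS, hyp⟩, ?_, ?_⟩
  · linarith [dist_triangle_left p z y]
  · linarith [dist_triangle y p z]

theorem isSeparatedFamily_carvedPiece {s : ℝ} (hρ : ∀ z ∈ Z, 2 * ρ z ≤ s) :
    IsSeparatedFamily dist S s t (carvedPiece S Z ρ t '' Z) where
  subset := forall_mem_image.2 fun z _ => carvedPiece_subset z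
  dist_le := forall_mem_image.2 fun z hz _ ha _ hb =>
    (dist_le_of_mem_carvedPiece ha hb).trans (hρ z hz)
  le_dist := forall_mem_image.2 fun _ hz => forall_mem_image.2 fun _ hw hne =>
    fun _ ha _ hb => le_dist_of_mem_carvedPiece hz hw (fun h => hne (h ▸ rfl)) ha hb

end Carving

section Step

variable {X : Type*} [PseudoMetricSpace X]

theorem exists_radius_ncard_inter_annulus_le {N : Set X} (hN : N.Finite) (z : X) {s δ : ℝ}
    {m : ℕ} (hm : 0 < m) (hδ : 0 < δ) (hmδ : 12 * m * δ ≤ s) :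
    ∃ r, s / 4 ≤ r ∧ 2 * r ≤ s ∧
      ((N ∩ {y | r - δ < dist y z ∧ dist y z < r + 2 * δ}).ncard : ℝ) ≤ N.ncard / m := by
  obtain ⟨k, hkm, hk⟩ := exists_lt_ncard_inter_le hN hm (pairwise_disjoint_annuli z (s / 4) hδ)
  have : ((k : ℝ) + 1) * δ ≤ m * δ := by gcongr; exact_mod_cast hkm
  exact ⟨s / 4 + 3 * k * δ, by nlinarith [k.cast_nonneg (α := ℝ)], by nlinarith, hk⟩

theorem exists_isSeparatedFamily_ncard_diff_le {C Rbar α : ℝ}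
    (hA : dimAle (dist : X → X → ℝ) univ C Rbar α)
    {s δ B : ℝ} {m : ℕ} (hm : 0 < m) (hδ : 0 < δ) (hmδ : 12 * m * δ ≤ s) (hsR : 3 * s < Rbar)
    {Y S : Set X} (hY : Y.Pairwise (δ ≤ dist · ·))
    (hB : ∀ x, ((Y ∩ ball x (2 * s) ∩ thickening δ S).ncard : ℝ) ≤ B) :
    ∃ 𝒱, IsSeparatedFamily dist S s δ 𝒱 ∧
      ∀ x, ((Y ∩ ball x (2 * s) ∩ thickening δ (S \ ⋃₀ 𝒱)).ncard : ℝ) ≤ C * 24 ^ α / m * B := by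
  have hδs : 12 * δ ≤ s := by nlinarith [(Nat.one_le_cast (α := ℝ)).2 hm]
  have hs : 0 < s := by linarith
  obtain ⟨Z, -, hZsep, hZnet⟩ := exists_pairwise_le_dist_net S (t := s / 4) (by linarith)
  have hNfin (z : X) : (Y ∩ ball z (2 * s) ∩ thickening δ S).Finite :=
    (hA.finite_inter_ball z hδ (by linarith) (by linarith) hY).subset inter_subset_left
  -- Only net points near the sphere of radius `ρ z` can be close to what the piece at `z`
  -- leaves uncovered, so `ρ z` is chosen where few of them are.
  choose ρ hρ₁ hρ₂ hρN using fun z => exists_radius_ncard_inter_annulus_le (hNfin z) z hm hδ hmδ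
  refine ⟨carvedPiece S Z ρ δ '' Z, isSeparatedFamily_carvedPiece fun z _ => hρ₂ z, fun x => ?_⟩
  have hZfin : (Z ∩ ball x (3 * s)).Finite :=
    hA.finite_inter_ball x (by linarith) (by linarith) hsR hZsep
  have hZcard : ((Z ∩ ball x (3 * s)).ncard : ℝ) ≤ C * 24 ^ α := by
    have := hA.ncard_inter_ball_le x (by linarith) (by linarith) hsR hZsep
    rwa [show 2 * (3 * s) / (s / 4) = 24 by field_simp; norm_num] at this
  have hsub : Y ∩ ball x (2 * s) ∩ thickening δ (S \ ⋃₀ (carvedPiece S Z ρ δ '' Z)) ⊆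
      ⋃ z ∈ Z ∩ ball x (3 * s), Y ∩ ball z (2 * s) ∩ thickening δ S ∩
        {y | ρ z - δ < dist y z ∧ dist y z < ρ z + 2 * δ} := by
    rintro y ⟨⟨hyY, hyx⟩, hyS⟩
    obtain ⟨z, hz, hyS', hlo, hhi⟩ := exists_near_sphere_of_mem_thickening_sdiff
      (fun p hp => let ⟨z, hz, hpz⟩ := hZnet p hp; ⟨z, hz, by linarith [hρ₁ z]⟩) hyS
    rw [mem_ball] at hyx
    simp only [mem_iUnion₂]
    refine ⟨z, ⟨hz, mem_ball.2 ?_⟩, ⟨⟨hyY, mem_ball.2 ?_⟩, hyS'⟩, ?_, ?_⟩ <;>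
      linarith [dist_triangle z y x, dist_comm z y, hρ₂ z]
  have hB0 : 0 ≤ B := (Nat.cast_nonneg _).trans (hB x)
  calc _ ≤ (Z ∩ ball x (3 * s)).ncard * (B / m) :=
        ncard_le_ncard_mul_of_subset_biUnion hZfin (fun z _ => (hNfin z).inter_of_left _) hsub
          fun z _ => (hρN z).trans (by gcongr; exact hB z)
    _ ≤ C * 24 ^ α * (B / m) := by gcongr
    _ = C * 24 ^ α / m * B := by ring

end Step

theorem dimNle_of_forall_ncard_le {X : Type*} [PseudoMetricSpace X] {C Rbar α : ℝ}
    (hA : dimAle (dist : X → X → ℝ) univ C Rbar α) {c s : ℝ} {m : ℕ} (hm : 0 < m) (hc : 0 < c)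
    (hs : 0 < s) (hmc : 12 * m * c ≤ 1) (hsR : 3 * s < Rbar) {Y : Set X}
    (hY : Y.Pairwise (c * s ≤ dist · ·)) (hnet : ∀ p, ∃ y ∈ Y, dist p y < c * s) (n : ℕ) :
    ∀ {S : Set X} {B : ℝ}, (∀ x, ((Y ∩ ball x (2 * s) ∩ thickening (c * s) S).ncard : ℝ) ≤ B) →
      (C * 24 ^ α / m) ^ (n + 1) * B < 1 → dimNle (fun a b : X => dist a b) S c s n := by
  have hcs : 0 < c * s := by positivity
  have hmcs : 12 * m * (c * s) ≤ s := by nlinarith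
  have hcs_le : 12 * (c * s) ≤ s := by nlinarith [(Nat.one_le_cast (α := ℝ)).2 hm]
  induction n with
  | zero =>
    intro S B hB hlt
    obtain ⟨𝒱, h𝒱, hres⟩ := exists_isSeparatedFamily_ncard_diff_le hA hm hcs hmcs hsR hY hB
    refine dimNle_zero_of_subset_sUnion h𝒱 (sdiff_eq_empty.1 ?_)
    refine eq_empty_of_ncard_inter_thickening_eq_zero (r := 2 * s) (by linarith) (fun x => ?_)
      hnet fun x => ?_
    · exact hA.finite_inter_ball x hcs (by linarith) (by linarith) hY
    · have : ((Y ∩ ball x (2 * s) ∩ thickening (c * s) (S \ ⋃₀ 𝒱)).ncard : ℝ) < 1 :=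
        (hres x).trans_lt (by simpa using hlt)
      exact Nat.lt_one_iff.1 (by exact_mod_cast this)
  | succ n ih =>
    intro S B hB hlt
    obtain ⟨𝒱, h𝒱, hres⟩ := exists_isSeparatedFamily_ncard_diff_le hA hm hcs hmcs hsR hY hB
    exact dimNle_succ_of_diff_sUnion h𝒱 (ih hres (by rwa [← mul_assoc, ← pow_succ]))

theorem exists_nat_div_pow_mul_rpow_lt_one {α : ℝ} {n : ℕ} (hα : α < n + 1) (K D : ℝ) :
    ∃ m : ℕ, 0 < m ∧ (K / m) ^ (n + 1) * (D * (m : ℝ) ^ α) < 1 := by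
  have hlim : Tendsto (fun m : ℕ => K ^ (n + 1) * D * (m : ℝ) ^ (-(n + 1 - α))) atTop (𝓝 0) := by
    have := ((tendsto_rpow_neg_atTop (sub_pos.2 hα)).comp
      tendsto_natCast_atTop_atTop).const_mul (K ^ (n + 1) * D)
    rwa [mul_zero] at this
  obtain ⟨m, hlt, hm⟩ :=
    ((hlim.eventually (gt_mem_nhds one_pos)).and (eventually_gt_atTop 0)).exists
  refine ⟨m, hm, lt_of_eq_of_lt ?_ hlt⟩
  have hm' : (0 : ℝ) < m := by exact_mod_cast hm
  rw [div_pow, Real.rpow_neg hm'.le, Real.rpow_sub hm', ← Nat.cast_add_one, Real.rpow_natCast]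
  field_simp

theorem nagata_dim_le_assouad_dim_general {X : Type*} [MetricSpace X] (α C : ℝ)
    (hcov : ∀ (x : X) (r R : ℝ), 0 < r → r < R →
      ∃ T : Finset X, (T.card : ℝ) ≤ C * (R / r) ^ α ∧
        ∀ z : X, dist z x < R → ∃ t ∈ T, dist z t < r) :
    ∃ c : ℝ, 0 < c ∧ c < 1 ∧ ∀ s : ℝ, 0 < s →
      dimNle (fun a b : X => dist a b) Set.univ c s (Nat.floor α) := by
  have hA (Rbar : ℝ) : dimAle (dist : X → X → ℝ) univ C Rbar α := fun r R hr hrR _ x _ =>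
    let ⟨T, hT, hTcov⟩ := hcov x r R hr hrR
    ⟨T, subset_univ _, hT, fun z _ => hTcov z⟩
  obtain ⟨m, hm, hsmall⟩ :=
    exists_nat_div_pow_mul_rpow_lt_one (Nat.lt_floor_add_one α) (C * 24 ^ α) (C * 48 ^ α)
  obtain ⟨c, hc, hmc⟩ : ∃ c : ℝ, 0 < c ∧ 12 * m * c = 1 :=
    ⟨1 / (12 * m), by positivity, by field_simp⟩
  have hc12 : 12 * c ≤ 1 := by nlinarith [(Nat.one_le_cast (α := ℝ)).2 hm]
  refine ⟨c, hc, by linarith, fun s hs => ?_⟩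
  have hcs : c * s ≤ 2 * s := by nlinarith
  obtain ⟨Y, -, hY, hnet⟩ := exists_pairwise_le_dist_net (univ : Set X) (mul_pos hc hs)
  have hinit (x : X) :
      ((Y ∩ ball x (2 * s) ∩ thickening (c * s) univ).ncard : ℝ) ≤ C * 48 ^ α * m ^ α := by
    have hcount := (hA (4 * s)).ncard_inter_ball_le x (mul_pos hc hs) hcs (by linarith) hY
    rw [show 2 * (2 * s) / (c * s) = 48 * m by
        rw [div_eq_iff (by positivity)]; linear_combination (-4 * s) * hmc,
      Real.mul_rpow (by norm_num) m.cast_nonneg, ← mul_assoc] at hcount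
    refine le_trans ?_ hcount
    exact_mod_cast ncard_le_ncard inter_subset_left
      ((hA (4 * s)).finite_inter_ball x (mul_pos hc hs) hcs (by linarith) hY)
  exact dimNle_of_forall_ncard_le (hA (4 * s)) hm hc hs hmc.le (by linarith) hY
    (fun p => hnet p (mem_univ p)) _ hinit hsmall

/-- If every ball `B(x,R)` in `X` can be covered by at most `C(R/r)^α` balls
of radius `r` (for all `0 < r < R`), then the Nagata dimension of `X` is at most `⌊α⌋`:
there is `c ∈ (0,1)` such that for every `s > 0` the space admits an `s`-bounded cover
`⋃_{k=0}^{⌊α⌋} 𝒰_k` with each `𝒰_k` being `cs`-separated. In particular, Nagata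
dimension is at most Assouad dimension. -/
theorem nagata_dim_le_assouad_dim {X : Type*} [MetricSpace X] (α C : ℝ)
    (hα : 0 ≤ α) (hC : 0 < C)
    (hcov : ∀ (x : X) (r R : ℝ), 0 < r → r < R →
      ∃ T : Finset X, (T.card : ℝ) ≤ C * (R / r) ^ α ∧
        ∀ z : X, dist z x < R → ∃ t ∈ T, dist z t < r) :
    ∃ c : ℝ, 0 < c ∧ c < 1 ∧ ∀ s : ℝ, 0 < s →
      dimNle (fun a b : X => dist a b) Set.univ c s (Nat.floor α) :=
  nagata_dim_le_assouad_dim_general α C hcov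
end

section
/- Let X be a metric space, let α ≥ 0, C > 0 and R > 0. Assume that for every x ∈ X the closed structure of the ball is uniformly controlled, namely dim_A(B(x,R),C,R) ≤ α: for all 0 < r < R' < R and every point y of the metric subspace B(x,R), the ball of radius R' around y in B(x,R) can be covered by at most C(R'/r)^α balls of radius r with centers in B(x,R). Then the linearly controlled dimension of X is at most ⌊α⌋: there exist c > 0 and s₀ > 0 such that for all 0 < s < s₀ the space X admits a cover 𝒰 = ⋃_{k=0}^{⌊α⌋} 𝒰_k in which every member has diameter at most s and each family 𝒰_k is cs-separated. -/
/-!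
Call `W` light (`IsLight W δ b D`) if every `δ`-separated subset of `W` lying in a ball of
radius `b` has at most `D` points. When `14r < R`, the Assouad bound lets a ball of radius `7r`
hold at most `K = C 28^α` points that are `r`-separated. It also makes `X` itself
`C (12M)^α`-light at scale `δ` and radius `3Mδ`.

Take a `4Mδ`-net of `W`. Around each net point there are `M` disjoint shells of width `2δ`
inside the ball of radius `8Mδ`. By pigeonhole one of them is light with bound `K D / M`, so
the union `S` of the chosen shells is `K² D / M`-light. No `δ`-chain in `W \ S` crosses a shell,
so the `δ`-chain components of `W \ S` have diameter at most `16Mδ`. Distinct components are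
`δ` apart, so they form one colour of the cover, and we recurse into `S`. Since
`α < ⌊α⌋ + 1`, for large `M` the set left after `⌊α⌋` steps has a lightness bound `D` with
`K D ≤ 8M`. Then its chains are short as well, because a long chain passes through `8M + 1`
separated points.
The cover has scale `s = 16Mδ` and separation `δ = s / (16M)`.
-/

open Metric Set

open Metric Set Relation Filter

theorem dimNle_succ_of_subset {Y : Type*} {d : Y → Y → ℝ} {S W : Set Y} {c s : ℝ} {k : ℕ}
    (hSW : S ⊆ W) (hS : dimNle d S c s k)
    (hWS : dimNle d (W \ S) c s 0) : dimNle d W c s (k + 1) := by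
  obtain ⟨𝒰, hsub, hcov, hdiam, hsep⟩ := hS
  obtain ⟨𝒱, vsub, vcov, vdiam, vsep⟩ := hWS
  refine ⟨Fin.cons (𝒱 0) 𝒰, fun j => ?_, fun p hp => ?_, fun j => ?_, fun j => ?_⟩
  · cases j using Fin.cases with
    | zero => exact fun U hU => (vsub 0 U hU).trans sdiff_subset
    | succ j => exact fun U hU => (hsub j U hU).trans hSW
  · by_cases hpS : p ∈ S
    · obtain ⟨j, U, hU, hpU⟩ := hcov p hpS
      exact ⟨j.succ, U, hU, hpU⟩
    · obtain ⟨j, U, hU, hpU⟩ := vcov p ⟨hp, hpS⟩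
      exact ⟨0, U, Fin.fin_one_eq_zero j ▸ hU, hpU⟩
  · cases j using Fin.cases with
    | zero => exact vdiam 0
    | succ j => exact hdiam j
  · cases j using Fin.cases with
    | zero => exact vsep 0
    | succ j => exact hsep j

section Metric

variable {X : Type*} [PseudoMetricSpace X]

section Light

def IsLight (W : Set X) (δ b D : ℝ) : Prop :=
  ∀ (y : X) (S : Finset X), ↑S ⊆ W ∩ ball y b → (S : Set X).Pairwise (δ ≤ dist · ·) →
    (S.card : ℝ) ≤ D

variable {W : Set X} {δ b D K : ℝ}

theorem IsLight.mono {W' : Set X} {b' D' : ℝ} (h : IsLight W δ b D) (hW : W' ⊆ W)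
    (hb : b' ≤ b) (hD : D ≤ D') : IsLight W' δ b' D' := fun y S hS hsep =>
  (h y S (hS.trans (inter_subset_inter hW (ball_subset_ball hb))) hsep).trans hD

theorem exists_subset_pairwise_le_dist_forall_dist_lt (s : Set X) {r : ℝ} (hr : 0 < r) :
    ∃ N ⊆ s, N.Pairwise (r ≤ dist · ·) ∧ ∀ x ∈ s, ∃ z ∈ N, dist x z < r := by
  obtain ⟨N, hN⟩ := zorn_subset {N | N ⊆ s ∧ N.Pairwise (r ≤ dist · ·)} fun c hc hchain =>
    ⟨⋃₀ c, ⟨sUnion_subset fun t ht => (hc ht).1,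
      (pairwise_sUnion hchain.directedOn).2 fun t ht => (hc ht).2⟩,
      fun _ => subset_sUnion_of_mem⟩
  refine ⟨N, hN.prop.1, hN.prop.2, fun x hx => ?_⟩
  by_contra! hfar
  have hxN : x ∉ N := fun h => (hfar x h).not_gt (by simpa using hr)
  have hins : insert x N ⊆ s ∧ (insert x N).Pairwise (r ≤ dist · ·) :=
    ⟨insert_subset hx hN.prop.1,
      hN.prop.2.insert fun z hz _ => ⟨hfar z hz, dist_comm x z ▸ hfar z hz⟩⟩
  exact hxN (hN.2 hins (subset_insert x N) (mem_insert x N))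

/-- Label each point of `S` by a piece `V z` containing it: the labels are `r`-separated and lie
in a ball of radius `ρ`, so there are at most `K` of them, and each label class has at most `D`
points. -/
theorem IsLight.biUnion {N : Set X} {V : X → Set X} {r a ρ : ℝ}
    (hN : N.Pairwise (r ≤ dist · ·)) (hV : ∀ z ∈ N, V z ⊆ ball z a)
    (hL : ∀ z ∈ N, IsLight (V z) δ b D) (hP : IsLight (univ : Set X) r ρ K) (hρ : b + a ≤ ρ)
    (hD : 0 ≤ D) : IsLight (⋃ z ∈ N, V z) δ b (K * D) := by
  classical
  intro y S hS hsep
  have hcov : ∀ x ∈ S, ∃ z ∈ N, x ∈ V z := fun x hx => by simpa using (hS hx).1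
  choose! g hgN hgV using hcov
  have himage : ((S.image g).card : ℝ) ≤ K := by
    refine hP y _ (fun w hw => ?_) (hN.mono fun w hw => ?_)
    · obtain ⟨x, hx, rfl⟩ := Finset.mem_image.1 hw
      refine ⟨mem_univ _, ?_⟩
      calc dist (g x) y ≤ dist x (g x) + dist x y := dist_triangle_left _ _ _
        _ < a + b := add_lt_add (hV _ (hgN x hx) (hgV x hx)) (hS hx).2
        _ ≤ ρ := by linarith
    · obtain ⟨x, hx, rfl⟩ := Finset.mem_image.1 hw
      exact hgN x hx
  have hfiber : ∀ w ∈ S.image g, (S.filter (g · = w)).card ≤ ⌊D⌋₊ := by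
    intro w hw
    obtain ⟨x₀, hx₀, rfl⟩ := Finset.mem_image.1 hw
    refine Nat.le_floor (hL _ (hgN x₀ hx₀) y _ (fun x hx => ?_) (hsep.mono ?_))
    · rw [Finset.coe_filter] at hx
      exact ⟨hx.2 ▸ hgV x hx.1, (hS hx.1).2⟩
    · exact Finset.coe_subset.2 (Finset.filter_subset _ _)
  calc (S.card : ℝ) ≤ ⌊D⌋₊ * (S.image g).card := by
        exact_mod_cast Finset.card_le_mul_card_image S _ hfiber
    _ ≤ D * K := by gcongr; exact Nat.floor_le hD
    _ = K * D := mul_comm _ _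

theorem IsLight.enlarge {ρ : ℝ} (hL : IsLight W δ b D) (hP : IsLight (univ : Set X) b (ρ + b) K)
    (hb : 0 < b) (hD : 0 ≤ D) : IsLight W δ ρ (K * D) := by
  obtain ⟨N, -, hN, hcov⟩ := exists_subset_pairwise_le_dist_forall_dist_lt W hb
  have hW : W ⊆ ⋃ z ∈ N, W ∩ ball z b := fun x hx => by
    obtain ⟨z, hz, hxz⟩ := hcov x hx
    exact mem_biUnion hz ⟨hx, hxz⟩
  have hpieces : ∀ z ∈ N, IsLight (W ∩ ball z b) δ ρ D := fun z _ y S hS hsep =>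
    hL z S (hS.trans inter_subset_left) hsep
  exact (IsLight.biUnion hN (fun z _ => inter_subset_right) hpieces hP le_rfl hD).mono hW
    le_rfl le_rfl

theorem le_dist_of_dist_mem_Ico {x y z : X} {i j : ℕ} {s w : ℝ} (hs : 0 ≤ s)
    (hws : w + δ ≤ s) (hij : i ≠ j) (hx : dist x z ∈ Ico (i * s) (i * s + w))
    (hy : dist y z ∈ Ico (j * s) (j * s + w)) : δ ≤ dist x y := by
  wlog h : i < j generalizing x y i j
  · rw [dist_comm]
    exact this hij.symm hy hx (hij.symm.lt_of_le (not_lt.1 h))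
  have hij' : ((i + 1 : ℕ) : ℝ) * s ≤ j * s := by gcongr; exact_mod_cast h
  push_cast at hij'
  linarith [dist_triangle y x z, dist_comm x y, hx.2, hy.1]

/-- Pigeonhole: if all `V i` were heavy, the union of heavy witnesses would be a
`δ`-separated subset of `⋃ V i` with more than `K` points. -/
theorem exists_isLight_of_pairwise_le_dist {ι : Type*} {s : Finset ι} (hs : s.Nonempty)
    {V : ι → Set X} {z : X} {ρ : ℝ} (hδ : 0 < δ)
    (hV : ∀ i ∈ s, ∀ j ∈ s, i ≠ j → ∀ x ∈ V i, ∀ y ∈ V j, δ ≤ dist x y)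
    (hz : ∀ i ∈ s, V i ⊆ ball z ρ) (hL : IsLight (⋃ i ∈ s, V i) δ ρ K) :
    ∃ i ∈ s, IsLight (V i) δ b (K / s.card) := by
  classical
  by_contra! hheavy
  have hwit : ∀ i ∈ s, ∃ S : Finset X, ↑S ⊆ V i ∧ (S : Set X).Pairwise (δ ≤ dist · ·) ∧
      K / s.card < S.card := fun i hi => by
    have h := hheavy i hi
    simp only [IsLight, not_forall, not_le] at h
    obtain ⟨_, S, hS, hsep, hbig⟩ := h
    exact ⟨S, hS.trans inter_subset_left, hsep, hbig⟩
  choose! S hSV hSsep hSbig using hwit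
  have hdisj : (s : Set ι).PairwiseDisjoint S := fun i hi j hj hij =>
    Finset.disjoint_left.2 fun x hxi hxj => by
      have := hV i hi j hj hij x (hSV i hi hxi) x (hSV j hj hxj)
      rw [dist_self] at this
      linarith
  have hsep : (s.biUnion S : Set X).Pairwise (δ ≤ dist · ·) := by
    intro x hx y hy hxy
    obtain ⟨i, hi, hxi⟩ := Finset.mem_biUnion.1 hx
    obtain ⟨j, hj, hyj⟩ := Finset.mem_biUnion.1 hy
    by_cases hij : i = j
    · subst hij
      exact hSsep i hi hxi hyj hxy
    · exact hV i hi j hj hij x (hSV i hi hxi) y (hSV j hj hyj)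
  have hsub : ↑(s.biUnion S) ⊆ (⋃ i ∈ s, V i) ∩ ball z ρ := by
    intro x hx
    obtain ⟨i, hi, hxi⟩ := Finset.mem_biUnion.1 hx
    exact ⟨mem_biUnion hi (hSV i hi hxi), hz i hi (hSV i hi hxi)⟩
  have hcard := hL z _ hsub hsep
  rw [Finset.card_biUnion hdisj] at hcard
  push_cast at hcard
  have hsum : ∑ _i ∈ s, K / s.card = K := by
    rw [Finset.sum_const, nsmul_eq_mul]
    field_simp [hs.card_pos.ne']
  linarith [Finset.sum_lt_sum_of_nonempty hs hSbig]

end Light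

section Chain

def ChainRel (W : Set X) (δ : ℝ) : X → X → Prop :=
  ReflTransGen fun p q => p ∈ W ∧ q ∈ W ∧ dist p q < δ

variable {W : Set X} {δ : ℝ} {a b : X}

theorem ChainRel.symm (h : ChainRel W δ a b) : ChainRel W δ b a := by
  induction h with
  | refl => exact ReflTransGen.refl
  | tail _ hpq ih =>
    exact ReflTransGen.head ⟨hpq.2.1, hpq.1, by rw [dist_comm]; exact hpq.2.2⟩ ih

theorem ChainRel.mem (ha : a ∈ W) (h : ChainRel W δ a b) : b ∈ W := by
  induction h with
  | refl => exact ha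
  | tail _ hpq _ => exact hpq.2.1

theorem ChainRel.dist_lt {z : X} {t : ℝ} (hW : ∀ x ∈ W, dist x z ∉ Ico t (t + δ))
    (ha : dist a z < t) (h : ChainRel W δ a b) : dist b z < t := by
  induction h with
  | refl => exact ha
  | @tail p q _ hpq ih =>
    by_contra! hge
    exact hW q hpq.2.1 ⟨hge, by linarith [dist_triangle q p z, dist_comm p q, hpq.2.2]⟩

theorem ChainRel.exists_dist_mem_Ico (hδ : 0 < δ) (h : ChainRel W δ a b) {v : ℝ}
    (hv0 : 0 ≤ v) (hv : v ≤ dist a b) : ∃ p, ChainRel W δ a p ∧ dist a p ∈ Ico v (v + δ) := by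
  induction h with
  | refl =>
    rw [dist_self] at hv
    exact ⟨a, ReflTransGen.refl, by simp [le_antisymm hv hv0, hδ]⟩
  | @tail p q hap hpq ih =>
    rcases le_or_gt v (dist a p) with hvp | hvp
    · exact ih hvp
    · exact ⟨q, hap.tail hpq, hv, by linarith [dist_triangle a p q, hpq.2.2]⟩

/-- Walking along a long chain one meets `m + 1` points in disjoint annuli around its start,
a `δ`-separated set in a ball of radius `ρ`. -/
theorem ChainRel.dist_lt_of_isLight {ρ D : ℝ} {m : ℕ} (hL : IsLight W δ ρ D) (hδ : 0 < δ)
    (hD : D < m + 1) (hρ : 2 * m * δ + δ ≤ ρ) (ha : a ∈ W) (h : ChainRel W δ a b) :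
    dist a b < 2 * m * δ := by
  classical
  have : Nonempty X := ⟨a⟩
  by_contra! hfar
  have hpts : ∀ j ∈ Finset.range (m + 1),
      ∃ p, ChainRel W δ a p ∧ dist a p ∈ Ico (j * (2 * δ)) (j * (2 * δ) + δ) := by
    intro j hj
    have hjm : (j : ℝ) ≤ m := by exact_mod_cast Finset.mem_range_succ_iff.1 hj
    exact h.exists_dist_mem_Ico hδ (by positivity) (by nlinarith)
  choose! p hpa hpd using hpts
  have hpd' : ∀ j ∈ Finset.range (m + 1), dist (p j) a ∈ Ico (j * (2 * δ)) (j * (2 * δ) + δ) :=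
    fun j hj => dist_comm a (p j) ▸ hpd j hj
  have hsep : ∀ j ∈ Finset.range (m + 1), ∀ j' ∈ Finset.range (m + 1), j ≠ j' →
      δ ≤ dist (p j) (p j') := fun j hj j' hj' hjj' =>
    le_dist_of_dist_mem_Ico (by positivity) (by linarith) hjj' (hpd' j hj) (hpd' j' hj')
  have hinj : Set.InjOn p (Finset.range (m + 1)) := fun j hj j' hj' he => by
    by_contra hne
    have := hsep j hj j' hj' hne
    rw [he, dist_self] at this
    linarith
  have hcard := hL a ((Finset.range (m + 1)).image p) ?_ ?_
  · rw [Finset.card_image_of_injOn hinj, Finset.card_range] at hcard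
    push_cast at hcard
    linarith
  · intro x hx
    obtain ⟨j, hj, rfl⟩ := Finset.mem_image.1 hx
    have hjm : (j : ℝ) ≤ m := by exact_mod_cast Finset.mem_range_succ_iff.1 hj
    exact ⟨(hpa j hj).mem ha, by rw [mem_ball]; nlinarith [(hpd' j hj).2]⟩
  · intro x hx y hy hxy
    obtain ⟨j, hj, rfl⟩ := Finset.mem_image.1 hx
    obtain ⟨j', hj', rfl⟩ := Finset.mem_image.1 hy
    exact hsep j hj j' hj' fun h => hxy (h ▸ rfl)

end Chain

theorem dimNle_zero_of_chainRel {W : Set X} {c s : ℝ}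
    (hdiam : ∀ x ∈ W, ∀ y, ChainRel W (c * s) x y → dist x y ≤ s) :
    dimNle (fun a b : X => dist a b) W c s 0 := by
  refine ⟨fun _ => (fun a => {b | ChainRel W (c * s) a b}) '' W, ?_, ?_, ?_, ?_⟩
  · rintro - - ⟨a, ha, rfl⟩ b hb
    exact hb.mem ha
  · intro p hp
    exact ⟨0, _, mem_image_of_mem _ hp, ReflTransGen.refl⟩
  · rintro - - ⟨a, ha, rfl⟩ x hx y hy
    exact hdiam x (hx.mem ha) y (hx.symm.trans hy)
  · rintro - - ⟨a, ha, rfl⟩ - ⟨b, hb, rfl⟩ hne x hx y hy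
    by_contra! hxy
    have hab : ChainRel W (c * s) a b :=
      (hx.tail ⟨hx.mem ha, hy.mem hb, hxy⟩).trans hy.symm
    exact hne (Set.ext fun u => ⟨hab.symm.trans, hab.trans⟩)

theorem isLight_univ_of_dimAle {C R α : ℝ}
    (hA : ∀ x : X, dimAle (fun a b : X => dist a b) (ball x R) C R α) {r ρ : ℝ} (hr : 0 < r)
    (hrρ : r < 4 * ρ) (hρR : 2 * ρ < R) : IsLight (univ : Set X) r ρ (C * (4 * ρ / r) ^ α) := by
  intro y S hS hsep
  have hρ : 0 < ρ := by linarith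
  obtain ⟨T, -, hTcard, hTcov⟩ :=
    hA y (r / 2) (2 * ρ) (by positivity) (by linarith) hρR y (mem_ball_self (by linarith))
  have hnear : ∀ x ∈ S, ∃ t ∈ T, dist x t < r / 2 := fun x hx =>
    hTcov x (ball_subset_ball (by linarith) (hS hx).2) (by linarith [mem_ball.1 (hS hx).2])
  choose! g hgT hg using hnear
  have hinj : Set.InjOn g S := fun x hx x' hx' he => by
    by_contra hne
    linarith [hsep hx hx' hne, dist_triangle_right x x' (g x), hg x hx, he ▸ hg x' hx']
  calc (S.card : ℝ) ≤ T.card := by exact_mod_cast Finset.card_le_card_of_injOn g hgT hinj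
    _ ≤ C * (2 * ρ / (r / 2)) ^ α := hTcard
    _ = C * (4 * ρ / r) ^ α := by rw [div_div_eq_mul_div]; ring_nf

def shell (W : Set X) (z : X) (t w : ℝ) : Set X := {x ∈ W | dist x z ∈ Ico t (t + w)}

section Construction

variable {R K δ D : ℝ} {M : ℕ} {W : Set X}

theorem shell_subset_ball {z : X} {i : ℕ} (hδ : 0 < δ) (hi : i < M) :
    shell W z (↑(M + i) * (4 * δ)) (2 * δ) ⊆ ball z (8 * M * δ) := fun x hx => by
  have hiM : (i : ℝ) + 1 ≤ M := by exact_mod_cast hi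
  push_cast at hx
  rw [mem_ball]
  nlinarith [hx.2.2]

theorem exists_isLight_shell
    (hK : ∀ r, 0 < r → 14 * r < R → IsLight (univ : Set X) r (7 * r) K) (hM : 1 ≤ M)
    (hδ : 0 < δ) (hR : 42 * M * δ < R) (hL : IsLight W δ (3 * M * δ) D) (hD : 0 ≤ D) (z : X) :
    ∃ i < M, IsLight (shell W z (↑(M + i) * (4 * δ)) (2 * δ)) δ (3 * M * δ) (K * D / M) := by
  have hMδ : 0 < (M : ℝ) * δ := mul_pos (by exact_mod_cast hM) hδ
  have hW : IsLight W δ (8 * M * δ) (K * D) :=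
    hL.enlarge ((hK (3 * M * δ) (by positivity) (by linarith)).mono subset_rfl (by nlinarith)
      le_rfl) (by positivity) hD
  obtain ⟨i, hi, hiL⟩ := exists_isLight_of_pairwise_le_dist (s := Finset.range M)
    (b := 3 * M * δ) (Finset.nonempty_range_iff.2 (by omega)) hδ
    (fun i _ j _ hij x hx y hy =>
      le_dist_of_dist_mem_Ico (by positivity) (by linarith) (by omega) hx.2 hy.2)
    (fun i hi => shell_subset_ball hδ (Finset.mem_range.1 hi))
    (hW.mono (iUnion₂_subset fun i _ => sep_subset _ _) le_rfl le_rfl)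
  exact ⟨i, Finset.mem_range.1 hi, by simpa using hiL⟩

theorem exists_isLight_subset_dimNle_diff
    (hK : ∀ r, 0 < r → 14 * r < R → IsLight (univ : Set X) r (7 * r) K) (hK0 : 0 ≤ K)
    (hM : 1 ≤ M) (hδ : 0 < δ) (hR : 56 * M * δ < R) (hL : IsLight W δ (3 * M * δ) D)
    (hD : 0 ≤ D) :
    ∃ S ⊆ W, IsLight S δ (3 * M * δ) (K * (K * D / M)) ∧
      dimNle (fun a b : X => dist a b) (W \ S) (16 * M)⁻¹ (16 * M * δ) 0 := by
  have hMδ : 0 < (M : ℝ) * δ := mul_pos (by exact_mod_cast hM) hδ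
  obtain ⟨N, -, hN, hNcov⟩ :=
    exists_subset_pairwise_le_dist_forall_dist_lt W (r := 4 * M * δ) (by positivity)
  choose i hiM hiL using exists_isLight_shell hK hM hδ (by linarith) hL hD
  refine ⟨⋃ z ∈ N, shell W z (↑(M + i z) * (4 * δ)) (2 * δ),
    iUnion₂_subset fun z _ => sep_subset _ _, ?_, ?_⟩
  · exact IsLight.biUnion hN (fun z _ => shell_subset_ball hδ (hiM z)) (fun z _ => hiL z)
      (hK (4 * M * δ) (by positivity) (by linarith)) (by linarith) (by positivity)
  · have hcs : (16 * M : ℝ)⁻¹ * (16 * M * δ) = δ := by field_simp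
    refine dimNle_zero_of_chainRel ?_
    rw [hcs]
    intro x hx y hxy
    obtain ⟨z, hz, hxz⟩ := hNcov x hx.1
    have hiz : (i z : ℝ) + 1 ≤ M := by exact_mod_cast hiM z
    have hyz : dist y z < ↑(M + i z) * (4 * δ) := by
      refine hxy.dist_lt (fun u hu hmem => hu.2 (mem_biUnion hz
        ⟨hu.1, Ico_subset_Ico_right (by linarith) hmem⟩)) ?_
      push_cast
      nlinarith
    push_cast at hyz
    nlinarith [dist_triangle_right x y z]

theorem dimNle_zero_of_isLight
    (hK : ∀ r, 0 < r → 14 * r < R → IsLight (univ : Set X) r (7 * r) K) (hM : 1 ≤ M)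
    (hδ : 0 < δ) (hR : 42 * M * δ < R) (hL : IsLight W δ (3 * M * δ) D) (hD : 0 ≤ D)
    (hKD : K * D ≤ 8 * M) :
    dimNle (fun a b : X => dist a b) W (16 * M)⁻¹ (16 * M * δ) 0 := by
  have hMδ : 0 < (M : ℝ) * δ := mul_pos (by exact_mod_cast hM) hδ
  have hcs : (16 * M : ℝ)⁻¹ * (16 * M * δ) = δ := by field_simp
  have hW : IsLight W δ (17 * M * δ) (K * D) :=
    hL.enlarge ((hK (3 * M * δ) (by positivity) (by linarith)).mono subset_rfl (by nlinarith)
      le_rfl) (by positivity) hD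
  refine dimNle_zero_of_chainRel ?_
  rw [hcs]
  intro x hx y hxy
  have hδM : δ ≤ M * δ := le_mul_of_one_le_left hδ.le (by exact_mod_cast hM)
  have := hxy.dist_lt_of_isLight hW hδ (m := 8 * M) (by push_cast; linarith)
    (by push_cast; linarith) hx
  push_cast at this
  linarith

theorem dimNle_of_isLight
    (hK : ∀ r, 0 < r → 14 * r < R → IsLight (univ : Set X) r (7 * r) K) (hK0 : 0 ≤ K)
    (hM : 1 ≤ M) (hδ : 0 < δ) (hR : 56 * M * δ < R) (k : ℕ) :
    ∀ {W : Set X} {D : ℝ}, IsLight W δ (3 * M * δ) D → 0 ≤ D →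
      K * (K ^ 2 / M) ^ k * D ≤ 8 * M →
      dimNle (fun a b : X => dist a b) W (16 * M)⁻¹ (16 * M * δ) k := by
  have hMδ : 0 < (M : ℝ) * δ := mul_pos (by exact_mod_cast hM) hδ
  induction k with
  | zero =>
    intro W D hL hD hKD
    exact dimNle_zero_of_isLight hK hM hδ (by linarith) hL hD (by simpa using hKD)
  | succ k ih =>
    intro W D hL hD hKD
    obtain ⟨S, hSW, hSL, hWS⟩ := exists_isLight_subset_dimNle_diff hK hK0 hM hδ hR hL hD
    refine dimNle_succ_of_subset hSW (ih hSL (by positivity) ?_) hWS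
    calc K * (K ^ 2 / M) ^ k * (K * (K * D / M)) = K * (K ^ 2 / M) ^ (k + 1) * D := by ring
      _ ≤ 8 * (M : ℝ) := hKD

end Construction

end Metric

theorem exists_nat_mul_div_pow_mul_rpow_le (K C : ℝ) {α : ℝ} {n : ℕ} (hα : α < n + 1) :
    ∃ M : ℕ, 1 ≤ M ∧ K * (K ^ 2 / M) ^ n * (C * (12 * M) ^ α) ≤ 8 * M := by
  set B := K ^ (2 * n + 1) * C * 12 ^ α / 8
  have hlim : Tendsto (fun M : ℕ => (M : ℝ) ^ ((n + 1 : ℝ) - α)) atTop atTop :=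
    (tendsto_rpow_atTop (by linarith)).comp tendsto_natCast_atTop_atTop
  obtain ⟨M, hMB, hM⟩ := ((hlim.eventually_ge_atTop B).and (eventually_ge_atTop 1)).exists
  have hMpos : (0 : ℝ) < M := by exact_mod_cast hM
  refine ⟨M, hM, ?_⟩
  calc K * (K ^ 2 / M) ^ n * (C * (12 * M) ^ α) = 8 * (B * (M : ℝ) ^ α) / (M : ℝ) ^ n := by
        rw [Real.mul_rpow (by norm_num) hMpos.le, div_pow, ← pow_mul]
        field_simp
        ring
    _ ≤ 8 * ((M : ℝ) ^ ((n + 1 : ℝ) - α) * (M : ℝ) ^ α) / (M : ℝ) ^ n := by gcongr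
    _ = 8 * M := by
        rw [← Real.rpow_add hMpos, sub_add_cancel, ← Real.rpow_natCast _ n, mul_div_assoc,
          ← Real.rpow_sub hMpos, add_sub_cancel_left, Real.rpow_one]

theorem lc_dim_le_local_assouad_general {X : Type*} [MetricSpace X] (α C R : ℝ)
    (hC : 0 < C) (hR : 0 < R)
    (hA : ∀ x : X, dimAle (fun a b : X => dist a b) (Metric.ball x R) C R α) :
    ∃ c s₀ : ℝ, 0 < c ∧ 0 < s₀ ∧ ∀ s : ℝ, 0 < s → s < s₀ →
      dimNle (fun a b : X => dist a b) Set.univ c s (Nat.floor α) := by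
  set n := ⌊α⌋₊
  set K := C * 28 ^ α
  have hK : ∀ r, 0 < r → 14 * r < R → IsLight (univ : Set X) r (7 * r) K := fun r hr hrR => by
    have := isLight_univ_of_dimAle hA hr (ρ := 7 * r) (by linarith) (by linarith)
    rwa [show 4 * (7 * r) / r = 28 by field_simp; ring] at this
  obtain ⟨M, hM, hKD⟩ := exists_nat_mul_div_pow_mul_rpow_le K C (Nat.lt_floor_add_one α)
  refine ⟨(16 * M)⁻¹, R / 4, by positivity, by positivity, fun s hs hsR => ?_⟩
  obtain ⟨δ, hδ, rfl⟩ : ∃ δ : ℝ, 0 < δ ∧ 16 * M * δ = s :=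
    ⟨s / (16 * M), by positivity, by field_simp⟩
  have hδM : δ ≤ M * δ := le_mul_of_one_le_left hδ.le (by exact_mod_cast hM)
  have hD : IsLight (univ : Set X) δ (3 * M * δ) (C * (12 * M) ^ α) := by
    have := isLight_univ_of_dimAle hA hδ (ρ := 3 * M * δ) (by linarith) (by linarith)
    rwa [show 4 * (3 * M * δ) / δ = 12 * M by field_simp; ring] at this
  exact dimNle_of_isLight hK (by positivity) hM hδ (by linarith) n hD (by positivity) hKD

/-- If `dim_A(B(x,R),C,R) ≤ α` for every `x ∈ X`, then the linearly
controlled dimension of `X` is at most `⌊α⌋`. -/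
theorem lc_dim_le_local_assouad {X : Type*} [MetricSpace X] (α C R : ℝ)
    (hα : 0 ≤ α) (hC : 0 < C) (hR : 0 < R)
    (hA : ∀ x : X, dimAle (fun a b : X => dist a b) (Metric.ball x R) C R α) :
    ∃ c s₀ : ℝ, 0 < c ∧ 0 < s₀ ∧ ∀ s : ℝ, 0 < s → s < s₀ →
      dimNle (fun a b : X => dist a b) Set.univ c s (Nat.floor α) :=
  lc_dim_le_local_assouad_general α C R hC hR hA
end

section
/- Let X be a metric space which is the union X = ⋃_{i ∈ I} X_i of subsets X_i that are pairwise r-separated, i.e. dist(X_i, X_j) ≥ r for all i ≠ j. Let c > 0, s > 0 and n ∈ ℕ, and suppose dim_N(X_i,c,s) ≤ n for every i ∈ I. Then dim_N(X, min{c, r/s}, s) ≤ n. -/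
open Metric Set

/-! Taking the union of the covers of the pieces, colour by colour, gives a cover of `X`.
Two members of the same colour coming from the same piece are `c s`-separated, and two
coming from different pieces are `r`-separated; both bounds are at least
`min c (r/s) * s`. -/

section

variable {X : Type*} {d : X → X → ℝ}

theorem dimNle.mono_const {A : Set X} {c c' s : ℝ} {n : ℕ} (h : dimNle d A c s n)
    (hc : c' ≤ c) (hs : 0 ≤ s) : dimNle d A c' s n := by
  obtain ⟨𝒰, hsub, hcov, hdiam, hsep⟩ := h
  exact ⟨𝒰, hsub, hcov, hdiam, fun k U hU V hV hne a ha b hb =>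
    (mul_le_mul_of_nonneg_right hc hs).trans (hsep k U hU V hV hne a ha b hb)⟩

theorem dimNle_iUnion {I : Type*} {A : I → Set X} {c s : ℝ} {n : ℕ}
    (hsep : ∀ i j, i ≠ j → ∀ a ∈ A i, ∀ b ∈ A j, c * s ≤ d a b)
    (hdim : ∀ i, dimNle d (A i) c s n) : dimNle d (⋃ i, A i) c s n := by
  choose 𝒱 hsub hcov hdiam hsepi using hdim
  refine ⟨fun k => ⋃ i, 𝒱 i k, ?_, ?_, ?_, ?_⟩
  · simp only [mem_iUnion]
    rintro k U ⟨i, hU⟩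
    exact (hsub i k U hU).trans (subset_iUnion A i)
  · simp only [mem_iUnion]
    rintro p ⟨i, hp⟩
    obtain ⟨k, U, hU, hpU⟩ := hcov i p hp
    exact ⟨k, U, ⟨i, hU⟩, hpU⟩
  · simp only [mem_iUnion]
    rintro k U ⟨i, hU⟩
    exact hdiam i k U hU
  · simp only [mem_iUnion]
    rintro k U ⟨i, hU⟩ V ⟨j, hV⟩ hne a ha b hb
    rcases eq_or_ne i j with rfl | hij
    · exact hsepi i k U hU V hV hne a ha b hb
    · exact hsep i j hij a (hsub i k U hU ha) b (hsub j k V hV hb)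

end

theorem nagata_separated_union_general {X : Type*} [MetricSpace X] {I : Type*} (Xi : I → Set X)
    (r c s : ℝ) (n : ℕ) (hs : 0 < s)
    (hcover : ⋃ i, Xi i = Set.univ)
    (hsep : ∀ i j, i ≠ j → ∀ a ∈ Xi i, ∀ b ∈ Xi j, r ≤ dist a b)
    (hdim : ∀ i, dimNle (fun a b : X => dist a b) (Xi i) c s n) :
    dimNle (fun a b : X => dist a b) Set.univ (min c (r / s)) s n := by
  have hscale : min c (r / s) * s ≤ r :=
    calc min c (r / s) * s ≤ r / s * s := mul_le_mul_of_nonneg_right (min_le_right _ _) hs.le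
      _ = r := div_mul_cancel₀ r hs.ne'
  rw [← hcover]
  exact dimNle_iUnion (fun i j hij a ha b hb => hscale.trans (hsep i j hij a ha b hb))
    fun i => (hdim i).mono_const (min_le_left _ _) hs.le

/-- If `X = ⋃ᵢ Xᵢ` with the `Xᵢ` pairwise `r`-separated and
`dim_N(Xᵢ,c,s) ≤ n` for every `i`, then `dim_N(X, min{c, r/s}, s) ≤ n`. -/
theorem nagata_separated_union {X : Type*} [MetricSpace X] {I : Type*} (Xi : I → Set X)
    (r c s : ℝ) (n : ℕ) (hr : 0 < r) (hc : 0 < c) (hs : 0 < s)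
    (hcover : ⋃ i, Xi i = Set.univ)
    (hsep : ∀ i j, i ≠ j → ∀ a ∈ Xi i, ∀ b ∈ Xi j, r ≤ dist a b)
    (hdim : ∀ i, dimNle (fun a b : X => dist a b) (Xi i) c s n) :
    dimNle (fun a b : X => dist a b) Set.univ (min c (r / s)) s n :=
  nagata_separated_union_general Xi r c s n hs hcover hsep hdim
end

section
/- Let X be a metric space, n ∈ ℕ, 0 < s₁ < ∞, 0 < c < 1 and x₀ ∈ X. Assume there is a sequence of radii r_m → ∞ such that dim_N(B(x₀,r_m),c,s) ≤ n for all 0 < s ≤ s₁ and all m = 1, 2, …. Then dim_N(X, c²/5, s) ≤ n for all 0 < s ≤ (1 + (2/3)c)s₁. -/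
open Metric Set

/-!
Take an ultrafilter on `ℕ` finer than `atTop`. Every point lies in `B(x₀, r_m)` for almost all
`m`, so it receives a colour and a cell of the `m`-th cover for almost all `m`, and the colour is
eventually constant because there are only `n + 1` of them. Declaring two points equivalent when
their colours and cells agree for almost all `m` yields an ultralimit cover of `X` which inherits
both the diameter bound `s` and the `c s`-separation, i.e. `dim_N(X, c, s) ≤ n` for `s ≤ s₁`.
For `s₁ < s ≤ (1 + (2/3)c)s₁` one uses the cover at scale `s₁`, which is `c²/5 · s`-separated.
-/

open Filter

theorem dimNle.mono {X : Type*} {d : X → X → ℝ} {A : Set X} {c c' s t : ℝ} {n : ℕ}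
    (h : dimNle d A c s n) (hst : s ≤ t) (hc : c' * t ≤ c * s) : dimNle d A c' t n := by
  obtain ⟨𝒰, hsub, hcov, hdiam, hsep⟩ := h
  exact ⟨𝒰, hsub, hcov, fun k U hU a ha b hb => (hdiam k U hU a ha b hb).trans hst,
    fun k U hU V hV hUV a ha b hb => hc.trans (hsep k U hU V hV hUV a ha b hb)⟩

theorem Ultrafilter.exists_eventually_eq {ι α : Type*} [Finite α] (φ : Ultrafilter ι)
    (f : ι → α) : ∃ a, ∀ᶠ i in φ, f i = a := by
  obtain ⟨a, ha⟩ := (φ.map f).eq_pure_of_finite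
  refine ⟨a, ?_⟩
  change {a} ∈ φ.map f
  rw [ha]
  exact mem_singleton a

theorem dimNle_univ_of_ultrafilter {ι X : Type*} {d : X → X → ℝ} {A : ι → Set X} {c s : ℝ}
    {n : ℕ} (φ : Ultrafilter ι) (hA : ∀ p, ∀ᶠ i in φ, p ∈ A i)
    (hdim : ∀ i, dimNle d (A i) c s n) : dimNle d univ c s n := by
  choose 𝒱 _ hcov hdiam hsep using hdim
  -- `w p i` is a coloured cell of the `i`-th cover containing `p`, whenever `p ∈ A i`
  have hw : ∀ p i, ∃ w : Fin (n + 1) × Set X, p ∈ A i → w.2 ∈ 𝒱 i w.1 ∧ p ∈ w.2 := by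
    intro p i
    by_cases hp : p ∈ A i
    · obtain ⟨k, U, hU, hpU⟩ := hcov i p hp
      exact ⟨(k, U), fun _ => ⟨hU, hpU⟩⟩
    · exact ⟨(0, ∅), fun h => absurd h hp⟩
  choose w hw using hw
  let cell : X → Set X := fun p => {q | w q =ᶠ[φ] w p}
  have cell_eq {p q : X} (h : w p =ᶠ[φ] w q) : cell p = cell q :=
    ext fun x => ⟨fun hx => hx.trans h, fun hx => hx.trans h.symm⟩
  refine ⟨fun κ => {C | ∃ p, (∀ᶠ i in φ, (w p i).1 = κ) ∧ C = cell p},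
    fun _ _ _ => subset_univ _, ?_, ?_, ?_⟩
  · intro p _
    obtain ⟨κ, hκ⟩ := φ.exists_eventually_eq fun i => (w p i).1
    exact ⟨κ, cell p, ⟨p, hκ, rfl⟩, EventuallyEq.rfl⟩
  · rintro κ _ ⟨p, -, rfl⟩ a ha b hb
    obtain ⟨i, hab, hai, hbi⟩ := ((ha.trans hb.symm).and ((hA a).and (hA b))).exists
    obtain ⟨hcell, haw⟩ := hw a i hai
    exact hdiam i _ _ hcell a haw b (hab ▸ (hw b i hbi).2)
  · rintro κ _ ⟨p, hp, rfl⟩ _ ⟨q, hq, rfl⟩ hpq a ha b hb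
    have hne : ∀ᶠ i in φ, w a i ≠ w b i :=
      Ultrafilter.eventually_not.2 fun h => hpq (by rw [← cell_eq ha, ← cell_eq hb, cell_eq h])
    have hcol : ∀ᶠ i in φ, (w a i).1 = κ ∧ (w b i).1 = κ := by
      filter_upwards [ha.fun_comp Prod.fst, hb.fun_comp Prod.fst, hp, hq] with i ha' hb' hp' hq'
      exact ⟨ha'.trans hp', hb'.trans hq'⟩
    obtain ⟨i, hne, ⟨hak, hbk⟩, hai, hbi⟩ := (hne.and (hcol.and ((hA a).and (hA b)))).exists
    obtain ⟨haU, haw⟩ := hw a i hai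
    obtain ⟨hbV, hbw⟩ := hw b i hbi
    rw [hak] at haU
    rw [hbk] at hbV
    refine hsep i κ _ haU _ hbV (fun hUV => hne ?_) a haw b hbw
    exact Prod.ext (hak.trans hbk.symm) hUV

theorem dimNle_univ_of_eventually_mem {ι X : Type*} {d : X → X → ℝ} {A : ι → Set X} {c s : ℝ}
    {n : ℕ} {l : Filter ι} [l.NeBot] (hA : ∀ p, ∀ᶠ i in l, p ∈ A i)
    (hdim : ∀ i, dimNle d (A i) c s n) : dimNle d univ c s n :=
  dimNle_univ_of_ultrafilter (.of l) (fun p => (hA p).filter_mono (Ultrafilter.of_le l)) hdim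

theorem sq_div_five_mul_le_mul_min {c s s₁ : ℝ} (hc0 : 0 < c) (hc1 : c < 1) (hs : 0 < s)
    (hsle : s ≤ (1 + (2 / 3) * c) * s₁) : c ^ 2 / 5 * s ≤ c * min s s₁ := by
  rw [mul_min_of_nonneg _ _ hc0.le]
  refine le_min (mul_le_mul_of_nonneg_right (by nlinarith) hs.le) ?_
  calc c ^ 2 / 5 * s ≤ c ^ 2 / 5 * ((1 + (2 / 3) * c) * s₁) := by gcongr
    _ = c * (c * (1 + (2 / 3) * c) / 5) * s₁ := by ring
    _ ≤ c * 1 * s₁ := by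
      have : 0 < s₁ := by nlinarith
      gcongr
      nlinarith
    _ = c * s₁ := by ring

/-- If there is a sequence of radii `r_m → ∞` with
`dim_N(B(x₀,r_m),c,s) ≤ n` for all `0 < s ≤ s₁`, then
`dim_N(X, c²/5, s) ≤ n` for all `0 < s ≤ (1 + (2/3)c)s₁`. -/
theorem nagata_exhaustion {X : Type*} [MetricSpace X] (n : ℕ) (s₁ c : ℝ)
    (hs₁ : 0 < s₁) (hc0 : 0 < c) (hc1 : c < 1) (x₀ : X) (r : ℕ → ℝ)
    (hr : Filter.Tendsto r Filter.atTop Filter.atTop)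
    (hdim : ∀ m : ℕ, ∀ s : ℝ, 0 < s → s ≤ s₁ →
      dimNle (fun a b : X => dist a b) (Metric.ball x₀ (r m)) c s n) :
    ∀ s : ℝ, 0 < s → s ≤ (1 + (2/3) * c) * s₁ →
      dimNle (fun a b : X => dist a b) (Set.univ : Set X) (c ^ 2 / 5) s n := by
  intro s hs hsle
  have hexhaust : ∀ p, ∀ᶠ m in atTop, p ∈ ball x₀ (r m) := fun p =>
    hr.eventually_gt_atTop (dist p x₀)
  have hdim_min := dimNle_univ_of_eventually_mem hexhaust fun m =>
    hdim m (min s s₁) (lt_min hs hs₁) (min_le_right s s₁)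
  exact hdim_min.mono (min_le_left s s₁) (sq_div_five_mul_le_mul_min hc0 hc1 hs hsle)
end

section
/- Let X be a metric space. Suppose there exist positive constants r, c and integers L, n such that every ball B(x,r), x ∈ X, regarded as a metric subspace, is doubling with constant L and satisfies dim_N(B(x,r),c,s) ≤ n for all s > 0. Then X has linearly controlled dimension at most n: there exist c' > 0 and s₀ > 0 such that dim_N(X,c',s) ≤ n for all 0 < s < s₀. -/
/-!
Take a maximal `r/8`-separated net `N` of `X`. Iterating the doubling condition five times shows
that a ball `B(x, r)` contains at most `L^5` points of `N`, so `N` can be coloured greedily with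
`L^5 + 1` colours such that points of the same colour are at least `r` apart. For one colour, the
balls `B(i, r/8)` around its points are more than `3r/4` apart, so the Nagata covers of the balls
`B(i, r)` restricted to them combine into a cover of their union at every scale `s < 3r/(4c)`.
The colour classes cover `X`, and finite unions preserve linearly controlled dimension: each
member of a fine cover (scale `c s/4`) of one set that comes close to a member of a cover at
scale `s` of the other is absorbed into it, which costs only constant factors.
-/

open Metric Set

section Nagata

variable {X : Type*}

lemma dimNle.subset {d : X → X → ℝ} {A B : Set X} {c s : ℝ} {n : ℕ}
    (h : dimNle d A c s n) (hBA : B ⊆ A) : dimNle d B c s n := by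
  obtain ⟨𝒰, -, hcov, hdiam, hsep⟩ := h
  refine ⟨fun k => (· ∩ B) '' 𝒰 k, ?_, ?_, ?_, ?_⟩
  · rintro k _ ⟨U, -, rfl⟩
    exact inter_subset_right
  · intro p hp
    obtain ⟨k, U, hU, hpU⟩ := hcov p (hBA hp)
    exact ⟨k, U ∩ B, mem_image_of_mem _ hU, hpU, hp⟩
  · rintro k _ ⟨U, hU, rfl⟩ a ha b hb
    exact hdiam k U hU a ha.1 b hb.1
  · rintro k _ ⟨U, hU, rfl⟩ _ ⟨V, hV, rfl⟩ hUV a ha b hb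
    exact hsep k U hU V hV (fun h => hUV (h ▸ rfl)) a ha.1 b hb.1

lemma dimNle_biUnion {ι : Type*} {d : X → X → ℝ} {I : Set ι} {P : ι → Set X} {c s : ℝ}
    {n : ℕ} (hP : ∀ i ∈ I, dimNle d (P i) c s n)
    (hI : I.Pairwise fun i j => ∀ a ∈ P i, ∀ b ∈ P j, c * s ≤ d a b) :
    dimNle d (⋃ i ∈ I, P i) c s n := by
  choose! 𝒰 hsub hcov hdiam hsep using hP
  refine ⟨fun k => ⋃ i ∈ I, 𝒰 i k, ?_, ?_, ?_, ?_⟩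
  · intro k U hU
    obtain ⟨i, hi, hU⟩ := mem_iUnion₂.1 hU
    exact (hsub i hi k U hU).trans (subset_biUnion_of_mem hi)
  · intro p hp
    obtain ⟨i, hi, hpi⟩ := mem_iUnion₂.1 hp
    obtain ⟨k, U, hU, hpU⟩ := hcov i hi p hpi
    exact ⟨k, U, mem_biUnion hi hU, hpU⟩
  · intro k U hU
    obtain ⟨i, hi, hU⟩ := mem_iUnion₂.1 hU
    exact hdiam i hi k U hU
  · intro k U hU V hV hUV a ha b hb
    obtain ⟨i, hi, hU⟩ := mem_iUnion₂.1 hU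
    obtain ⟨j, hj, hV⟩ := mem_iUnion₂.1 hV
    obtain rfl | hij := eq_or_ne i j
    · exact hsep i hi k U hU V hV hUV a ha b hb
    · exact hI hi hj hij a (hsub i hi k U hU ha) b (hsub j hj k V hV hb)

lemma dimNle_empty (d : X → X → ℝ) (c s : ℝ) (n : ℕ) : dimNle d ∅ c s n :=
  ⟨fun _ => ∅, by simp, by simp, by simp, by simp⟩

end Nagata

section Gluing

variable {X : Type*} [PseudoMetricSpace X]

def MembersDiamLE (𝒰 : Set (Set X)) (D : ℝ) : Prop :=
  ∀ U ∈ 𝒰, ∀ a ∈ U, ∀ b ∈ U, dist a b ≤ D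

def MembersSeparated (𝒰 : Set (Set X)) (ρ : ℝ) : Prop :=
  ∀ U ∈ 𝒰, ∀ V ∈ 𝒰, U ≠ V → ∀ a ∈ U, ∀ b ∈ V, ρ ≤ dist a b

def NearWithin (t : ℝ) (V U : Set X) : Prop :=
  ∃ a ∈ V, ∃ b ∈ U, dist a b < t

def glue (𝒰 𝒱 : Set (Set X)) (t : ℝ) : Set (Set X) :=
  (fun U => U ∪ ⋃₀ {V ∈ 𝒱 | NearWithin t V U}) '' 𝒰 ∪ {V ∈ 𝒱 | ∀ U ∈ 𝒰, ¬NearWithin t V U}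

variable {𝒰 𝒱 : Set (Set X)} {s δ t σ τ ρ : ℝ}

lemma sUnion_glue_subset : ⋃₀ glue 𝒰 𝒱 t ⊆ ⋃₀ 𝒰 ∪ ⋃₀ 𝒱 := by
  rintro p ⟨W, ⟨U, hU, rfl⟩ | ⟨hV, -⟩, hpW⟩
  · rcases hpW with hpU | ⟨V, ⟨hV, -⟩, hpV⟩
    · exact Or.inl ⟨U, hU, hpU⟩
    · exact Or.inr ⟨V, hV, hpV⟩
  · exact Or.inr ⟨W, hV, hpW⟩

lemma subset_sUnion_glue : ⋃₀ 𝒰 ∪ ⋃₀ 𝒱 ⊆ ⋃₀ glue 𝒰 𝒱 t := by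
  rintro p (⟨U, hU, hpU⟩ | ⟨V, hV, hpV⟩)
  · exact ⟨_, Or.inl ⟨U, hU, rfl⟩, Or.inl hpU⟩
  · by_cases hnear : ∃ U ∈ 𝒰, NearWithin t V U
    · obtain ⟨U, hU, hVU⟩ := hnear
      exact ⟨_, Or.inl ⟨U, hU, rfl⟩, Or.inr ⟨V, ⟨hV, hVU⟩, hpV⟩⟩
    · push Not at hnear
      exact ⟨V, Or.inr ⟨hV, hnear⟩, hpV⟩

lemma exists_dist_lt_of_mem_merged (h𝒱 : MembersDiamLE 𝒱 δ) {U : Set X} {a : X}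
    (ha : a ∈ ⋃₀ {V ∈ 𝒱 | NearWithin t V U}) : ∃ b ∈ U, dist a b < δ + t := by
  obtain ⟨V, ⟨hV, a', ha'V, b, hbU, ha'b⟩, haV⟩ := ha
  refine ⟨b, hbU, ?_⟩
  linarith [dist_triangle a a' b, h𝒱 V hV a haV a' ha'V]

lemma MembersDiamLE.glue (h𝒰 : MembersDiamLE 𝒰 s) (h𝒱 : MembersDiamLE 𝒱 δ) (hs : 0 ≤ s)
    (hδ : 0 ≤ δ) (ht : 0 ≤ t) : MembersDiamLE (glue 𝒰 𝒱 t) (s + 2 * (δ + t)) := by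
  rintro W (⟨U, hU, rfl⟩ | ⟨hV, -⟩)
  · have hnear : ∀ a ∈ U ∪ ⋃₀ {V ∈ 𝒱 | NearWithin t V U}, ∃ a' ∈ U, dist a a' ≤ δ + t := by
      rintro a (ha | ha)
      · refine ⟨a, ha, ?_⟩
        linarith [dist_self a]
      · obtain ⟨a', ha', h⟩ := exists_dist_lt_of_mem_merged h𝒱 ha
        exact ⟨a', ha', h.le⟩
    intro a ha b hb
    obtain ⟨a', ha', haa'⟩ := hnear a ha
    obtain ⟨b', hb', hbb'⟩ := hnear b hb
    linarith [dist_triangle4 a a' b' b, dist_comm b b', h𝒰 U hU a' ha' b' hb']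
  · intro a ha b hb
    linarith [h𝒱 W hV a ha b hb]

lemma NearWithin.unique (h𝒰 : MembersSeparated 𝒰 σ) (h𝒱 : MembersDiamLE 𝒱 δ)
    (hσ : 2 * t + δ < σ) {V U₁ U₂ : Set X} (hV : V ∈ 𝒱) (hU₁ : U₁ ∈ 𝒰) (hU₂ : U₂ ∈ 𝒰)
    (h₁ : NearWithin t V U₁) (h₂ : NearWithin t V U₂) : U₁ = U₂ := by
  obtain ⟨a₁, ha₁, b₁, hb₁, hab₁⟩ := h₁
  obtain ⟨a₂, ha₂, b₂, hb₂, hab₂⟩ := h₂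
  by_contra hne
  linarith [h𝒰 U₁ hU₁ U₂ hU₂ hne b₁ hb₁ b₂ hb₂, dist_triangle4 b₁ a₁ a₂ b₂, dist_comm b₁ a₁,
    h𝒱 V hV a₁ ha₁ a₂ ha₂]

lemma le_dist_of_mem_of_mem_merged (h𝒰 : MembersSeparated 𝒰 σ) (h𝒱 : MembersDiamLE 𝒱 δ)
    (hδ : 0 ≤ δ) (ht : 0 ≤ t) (hσ : 2 * t + δ < σ) (hρt : ρ ≤ t) {U₁ U₂ : Set X}
    (hU₁ : U₁ ∈ 𝒰) (hU₂ : U₂ ∈ 𝒰) (hne : U₁ ≠ U₂) {a b : X} (ha : a ∈ U₁)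
    (hb : b ∈ U₂ ∪ ⋃₀ {V ∈ 𝒱 | NearWithin t V U₂}) : ρ ≤ dist a b := by
  rcases hb with hb | hb
  · linarith [h𝒰 U₁ hU₁ U₂ hU₂ hne a ha b hb]
  · obtain ⟨b', hb', hbb'⟩ := exists_dist_lt_of_mem_merged h𝒱 hb
    linarith [h𝒰 U₁ hU₁ U₂ hU₂ hne a ha b' hb', dist_triangle a b b']

lemma le_dist_of_mem_merged_of_mem_kept (h𝒱 : MembersSeparated 𝒱 τ) (hρt : ρ ≤ t)
    (hρτ : ρ ≤ τ) {U V : Set X} (hV : V ∈ 𝒱) (hfar : ¬NearWithin t V U) {a b : X}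
    (ha : a ∈ U ∪ ⋃₀ {V ∈ 𝒱 | NearWithin t V U}) (hb : b ∈ V) : ρ ≤ dist a b := by
  rcases ha with ha | ⟨V', ⟨hV', hnear⟩, ha⟩
  · have : t ≤ dist b a := not_lt.1 fun h => hfar ⟨b, hb, a, ha, h⟩
    linarith [dist_comm a b]
  · have hne : V' ≠ V := by rintro rfl; exact hfar hnear
    linarith [h𝒱 V' hV' V hV hne a ha b hb]

lemma MembersSeparated.glue (h𝒰 : MembersSeparated 𝒰 σ) (h𝒱diam : MembersDiamLE 𝒱 δ)
    (h𝒱 : MembersSeparated 𝒱 τ) (hδ : 0 ≤ δ) (ht : 0 ≤ t) (hσ : 2 * t + δ < σ) (hρt : ρ ≤ t)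
    (hρτ : ρ ≤ τ) : MembersSeparated (glue 𝒰 𝒱 t) ρ := by
  rintro _ (⟨U₁, hU₁, rfl⟩ | ⟨hV₁, hfar₁⟩) _ (⟨U₂, hU₂, rfl⟩ | ⟨hV₂, hfar₂⟩) hne a ha b hb
  · have hU : U₁ ≠ U₂ := by rintro rfl; exact hne rfl
    rcases ha with ha | ha
    · exact le_dist_of_mem_of_mem_merged h𝒰 h𝒱diam hδ ht hσ hρt hU₁ hU₂ hU ha hb
    rcases hb with hb | hb
    · rw [dist_comm]
      exact le_dist_of_mem_of_mem_merged h𝒰 h𝒱diam hδ ht hσ hρt hU₂ hU₁ hU.symm hb (Or.inr ha)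
    obtain ⟨V₁, ⟨hV₁, hnear₁⟩, ha⟩ := ha
    obtain ⟨V₂, ⟨hV₂, hnear₂⟩, hb⟩ := hb
    have hV : V₁ ≠ V₂ := by
      rintro rfl; exact hU (hnear₁.unique h𝒰 h𝒱diam hσ hV₁ hU₁ hU₂ hnear₂)
    linarith [h𝒱 V₁ hV₁ V₂ hV₂ hV a ha b hb]
  · exact le_dist_of_mem_merged_of_mem_kept h𝒱 hρt hρτ hV₂ (hfar₂ U₁ hU₁) ha hb
  · rw [dist_comm]
    exact le_dist_of_mem_merged_of_mem_kept h𝒱 hρt hρτ hV₁ (hfar₁ U₂ hU₂) hb ha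
  · linarith [h𝒱 _ hV₁ _ hV₂ hne a ha b hb]

end Gluing

section LinControlled

variable {X : Type*} [PseudoMetricSpace X]

lemma dimNle_union {A B : Set X} {c₁ c₂ s : ℝ} {n : ℕ} (hc₁ : 0 < c₁) (hs : 0 < s)
    (hA : dimNle dist A c₁ s n) (hB : dimNle dist B c₂ (c₁ * s / 4) n) :
    dimNle dist (A ∪ B) (min 1 c₂ * c₁ / (4 * (1 + c₁))) ((1 + c₁) * s) n := by
  obtain ⟨𝒰, h𝒰A, h𝒰cov, h𝒰diam, h𝒰sep⟩ := hA
  obtain ⟨𝒱, h𝒱B, h𝒱cov, h𝒱diam, h𝒱sep⟩ := hB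
  have hcs : 0 < c₁ * s := by positivity
  have hρ : min 1 c₂ * c₁ / (4 * (1 + c₁)) * ((1 + c₁) * s) = min 1 c₂ * (c₁ * s / 4) := by
    field_simp
  refine ⟨fun k => glue (𝒰 k) (𝒱 k) (c₁ * s / 4), fun k W hW => ?_, fun p hp => ?_,
    fun k => ?_, fun k => ?_⟩
  · intro p hpW
    rcases sUnion_glue_subset ⟨W, hW, hpW⟩ with ⟨U, hU, hpU⟩ | ⟨V, hV, hpV⟩
    · exact Or.inl (h𝒰A k U hU hpU)
    · exact Or.inr (h𝒱B k V hV hpV)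
  · have : ∃ k, p ∈ ⋃₀ 𝒰 k ∪ ⋃₀ 𝒱 k := by
      rcases hp with hp | hp
      · obtain ⟨k, U, hU, hpU⟩ := h𝒰cov p hp
        exact ⟨k, Or.inl ⟨U, hU, hpU⟩⟩
      · obtain ⟨k, V, hV, hpV⟩ := h𝒱cov p hp
        exact ⟨k, Or.inr ⟨V, hV, hpV⟩⟩
    obtain ⟨k, hpk⟩ := this
    obtain ⟨W, hW, hpW⟩ := subset_sUnion_glue hpk
    exact ⟨k, W, hW, hpW⟩
  · have h := MembersDiamLE.glue (t := c₁ * s / 4) (h𝒰diam k) (h𝒱diam k) hs.le (by positivity)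
      (by positivity)
    rwa [show s + 2 * (c₁ * s / 4 + c₁ * s / 4) = (1 + c₁) * s by ring] at h
  · rw [hρ]
    exact MembersSeparated.glue (h𝒰sep k) (h𝒱diam k) (h𝒱sep k) (by positivity) (by positivity)
      (by linarith) (mul_le_of_le_one_left (by positivity) (min_le_left _ _))
      (mul_le_mul_of_nonneg_right (min_le_right _ _) (by positivity))

def LinControlledDimLE (A : Set X) (n : ℕ) : Prop :=
  ∃ c s₀ : ℝ, 0 < c ∧ 0 < s₀ ∧ ∀ s : ℝ, 0 < s → s < s₀ → dimNle dist A c s n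

lemma LinControlledDimLE.union {A B : Set X} {n : ℕ} (hA : LinControlledDimLE A n)
    (hB : LinControlledDimLE B n) : LinControlledDimLE (A ∪ B) n := by
  obtain ⟨c₁, s₁, hc₁, hs₁, hA⟩ := hA
  obtain ⟨c₂, s₂, hc₂, hs₂, hB⟩ := hB
  refine ⟨min 1 c₂ * c₁ / (4 * (1 + c₁)), (1 + c₁) * min s₁ (4 * s₂ / c₁), by positivity,
    by positivity, fun σ hσ hσlt => ?_⟩
  set s := σ / (1 + c₁)
  have hσs : σ = (1 + c₁) * s := (mul_div_cancel₀ σ (by positivity)).symm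
  have hs : 0 < s := by positivity
  have hslt : s < min s₁ (4 * s₂ / c₁) := by
    rw [hσs] at hσlt
    exact lt_of_mul_lt_mul_left hσlt (by positivity)
  have hs₂ : c₁ * s / 4 < s₂ := by
    have := (lt_div_iff₀ hc₁).1 (hslt.trans_le (min_le_right _ _))
    linarith
  rw [hσs]
  exact dimNle_union hc₁ hs (hA s hs (hslt.trans_le (min_le_left _ _)))
    (hB _ (by positivity) hs₂)

lemma LinControlledDimLE.biUnion_finset {ι : Type*} {P : ι → Set X} {n : ℕ} (I : Finset ι)
    (hP : ∀ i ∈ I, LinControlledDimLE (P i) n) : LinControlledDimLE (⋃ i ∈ I, P i) n := by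
  classical
  induction I using Finset.induction_on with
  | empty =>
    simpa using ⟨1, 1, one_pos, one_pos, fun s _ _ => dimNle_empty dist 1 s n⟩
  | insert i I _ ih =>
    rw [Finset.set_biUnion_insert]
    exact (hP i (I.mem_insert_self i)).union (ih fun j hj => hP j (I.mem_insert_of_mem hj))

end LinControlled

section Doubling

variable {X : Type*} [PseudoMetricSpace X]

def IsDoublingOn (S : Set X) (L : ℕ) : Prop :=
  ∀ s : ℝ, 0 < s → ∀ B ⊆ S, (∀ a ∈ B, ∀ b ∈ B, dist a b ≤ 2 * s) →
    ∃ 𝒞 : Finset (Set X), 𝒞.card ≤ L ∧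
      (∀ D ∈ 𝒞, D ⊆ S ∧ ∀ a ∈ D, ∀ b ∈ D, dist a b ≤ s) ∧ B ⊆ ⋃₀ (↑𝒞 : Set (Set X))

lemma IsDoublingOn.exists_cover_pow {S B : Set X} {L : ℕ} {s : ℝ} (h : IsDoublingOn S L)
    (hs : 0 < s) (hB : B ⊆ S) (hBdiam : ∀ a ∈ B, ∀ b ∈ B, dist a b ≤ 2 * s) (k : ℕ) :
    ∃ 𝒞 : Finset (Set X), 𝒞.card ≤ L ^ k ∧
      (∀ D ∈ 𝒞, D ⊆ S ∧ ∀ a ∈ D, ∀ b ∈ D, dist a b ≤ 2 * s / 2 ^ k) ∧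
      B ⊆ ⋃₀ (↑𝒞 : Set (Set X)) := by
  classical
  induction k with
  | zero => exact ⟨{B}, by simp, by simpa using ⟨hB, hBdiam⟩, by simp⟩
  | succ k ih =>
    obtain ⟨𝒞, hcard, hD, hcov⟩ := ih
    have hsplit : ∀ D ∈ 𝒞, ∃ 𝒞' : Finset (Set X), 𝒞'.card ≤ L ∧
        (∀ D' ∈ 𝒞', D' ⊆ S ∧ ∀ a ∈ D', ∀ b ∈ D', dist a b ≤ 2 * s / 2 ^ (k + 1)) ∧
        D ⊆ ⋃₀ (↑𝒞' : Set (Set X)) := fun D hD' =>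
      h _ (by positivity) D (hD D hD').1 fun a ha b hb => by
        rw [pow_succ, ← div_div, mul_div_cancel₀ _ two_ne_zero]
        exact (hD D hD').2 a ha b hb
    choose! 𝒞' hcard' hD' hcov' using hsplit
    refine ⟨𝒞.biUnion 𝒞', ?_, ?_, ?_⟩
    · calc (𝒞.biUnion 𝒞').card ≤ ∑ D ∈ 𝒞, (𝒞' D).card := Finset.card_biUnion_le
        _ ≤ 𝒞.card * L := Finset.sum_le_card_nsmul _ _ _ hcard'
        _ ≤ L ^ (k + 1) := by rw [pow_succ]; exact Nat.mul_le_mul_right _ hcard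
    · intro D' hD'mem
      obtain ⟨D, hD, hD'D⟩ := Finset.mem_biUnion.1 hD'mem
      exact hD' D hD D' hD'D
    · intro p hp
      obtain ⟨D, hD, hpD⟩ := hcov hp
      obtain ⟨D', hD'D, hpD'⟩ := hcov' D hD hpD
      exact ⟨D', Finset.mem_biUnion.2 ⟨D, hD, hD'D⟩, hpD'⟩

lemma IsDoublingOn.encard_le_of_pairwise_lt_dist {S T : Set X} {L k : ℕ} {s : ℝ}
    (h : IsDoublingOn S L) (hs : 0 < s) (hT : T ⊆ S)
    (hTdiam : ∀ a ∈ T, ∀ b ∈ T, dist a b ≤ 2 * s)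
    (hsep : T.Pairwise fun a b => 2 * s / 2 ^ k < dist a b) : T.encard ≤ L ^ k := by
  obtain ⟨𝒞, hcard, hD, hcov⟩ := h.exists_cover_pow hs hT hTdiam k
  choose! D hD𝒞 hmem using fun p (hp : p ∈ T) => hcov hp
  calc T.encard ≤ (↑𝒞 : Set (Set X)).encard := by
        refine Set.encard_le_encard_of_injOn (fun p hp => hD𝒞 p hp) fun a ha b hb hab => ?_
        by_contra hne
        have := (hD _ (hD𝒞 a ha)).2 a (hmem a ha) b (hab ▸ hmem b hb)
        exact (hsep ha hb hne).not_ge this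
    _ ≤ L ^ k := by rw [Set.encard_coe_eq_coe_finsetCard]; exact_mod_cast hcard

end Doubling

namespace SimpleGraph

theorem colorable_of_forall_encard_neighborSet_le {V : Type*} (G : SimpleGraph V) {D : ℕ}
    (h : ∀ v, (G.neighborSet v).encard ≤ D) : G.Colorable (D + 1) := by
  let r : V → V → Prop := WellOrderingRel
  have hwf : WellFounded r := IsWellFounded.wf
  let col : V → Fin (D + 1) := hwf.fix fun v f =>
    Classical.epsilon fun m => ∀ w (hw : r w v), G.Adj w v → f w hw ≠ m
  have hcol : ∀ v, ∀ w, r w v → G.Adj w v → col w ≠ col v := by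
    intro v
    have hfix : col v = Classical.epsilon fun m => ∀ w, r w v → G.Adj w v → col w ≠ m :=
      hwf.fix_eq _ v
    rw [hfix]
    refine Classical.epsilon_spec (p := fun m => ∀ w, r w v → G.Adj w v → col w ≠ m) ?_
    by_contra! hall
    have hsurj : (Set.univ : Set (Fin (D + 1))) ⊆ col '' {w | r w v ∧ G.Adj w v} := by
      intro m _
      obtain ⟨w, hw, hadj, rfl⟩ := hall m
      exact ⟨w, ⟨hw, hadj⟩, rfl⟩
    have := calc ((D + 1 : ℕ) : ℕ∞) = (Set.univ : Set (Fin (D + 1))).encard := by simp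
      _ ≤ (col '' {w | r w v ∧ G.Adj w v}).encard := Set.encard_le_encard hsurj
      _ ≤ {w | r w v ∧ G.Adj w v}.encard := Set.encard_image_le _ _
      _ ≤ (G.neighborSet v).encard := Set.encard_le_encard fun w hw => hw.2.symm
      _ ≤ D := h v
    norm_cast at this
    omega
  refine ⟨Coloring.mk col fun {a b} hab => ?_⟩
  rcases trichotomous_of r a b with hr | rfl | hr
  · exact hcol b a hr hab
  · exact (G.irrefl hab).elim
  · exact (hcol a b hr hab.symm).symm

end SimpleGraph

section Net

variable {X : Type*} [PseudoMetricSpace X]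

lemma exists_separated_net {δ : ℝ} (hδ : 0 < δ) :
    ∃ N : Set X, N.Pairwise (fun a b => δ ≤ dist a b) ∧ ∀ x, ∃ y ∈ N, dist x y < δ := by
  obtain ⟨N, hN⟩ := zorn_subset {N : Set X | N.Pairwise fun a b => δ ≤ dist a b}
    fun c hc hchain => ⟨⋃₀ c, hchain.pairwise_sUnion.2 hc, fun _ => subset_sUnion_of_mem⟩
  refine ⟨N, hN.prop, fun x => ?_⟩
  by_contra! hfar
  have hins : (insert x N).Pairwise fun a b => δ ≤ dist a b :=
    hN.prop.insert fun y hy _ => ⟨hfar y hy, dist_comm x y ▸ hfar y hy⟩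
  have hx : x ∈ N := hN.mem_of_prop_insert hins
  linarith [hfar x hx, dist_self x]

lemma exists_coloring_of_isDoublingOn_ball {r : ℝ} {L : ℕ} {N : Set X} (hr : 0 < r)
    (hdb : ∀ x : X, IsDoublingOn (ball x r) L) (hN : N.Pairwise fun a b => r / 8 ≤ dist a b) :
    ∃ C : X → Fin (L ^ 5 + 1), ∀ i ∈ N, ∀ j ∈ N, i ≠ j → C i = C j → r ≤ dist i j := by
  let G := SimpleGraph.fromRel fun a b : X => a ∈ N ∧ b ∈ N ∧ dist a b < r
  have hadj : ∀ {v w : X}, G.Adj v w → v ∈ N ∧ w ∈ N ∧ dist w v < r := by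
    rintro v w ⟨-, ⟨hv, hw, hvw⟩ | ⟨hw, hv, hwv⟩⟩
    · exact ⟨hv, hw, dist_comm v w ▸ hvw⟩
    · exact ⟨hv, hw, hwv⟩
  have hdeg : ∀ v, (G.neighborSet v).encard ≤ L ^ 5 := fun v =>
    (hdb v).encard_le_of_pairwise_lt_dist hr (fun w hw => (hadj hw).2.2)
      (fun a ha b hb => by
        linarith [dist_triangle_right a b v, (hadj ha).2.2, (hadj hb).2.2])
      fun a ha b hb hab => by
        linarith [hN (hadj ha).2.1 (hadj hb).2.1 hab]
  obtain ⟨C⟩ := G.colorable_of_forall_encard_neighborSet_le hdeg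
  refine ⟨C, fun i hi j hj hij hC => not_lt.1 fun hlt => C.valid ?_ hC⟩
  exact ⟨hij, Or.inl ⟨hi, hj, hlt⟩⟩

lemma linControlledDimLE_biUnion_ball {I : Set X} {c r ρ R : ℝ} {n : ℕ} (hc : 0 < c)
    (hρr : ρ ≤ r) (hρR : 2 * ρ < R)
    (hdim : ∀ x : X, ∀ s : ℝ, 0 < s → dimNle dist (ball x r) c s n)
    (hI : I.Pairwise fun i j => R ≤ dist i j) : LinControlledDimLE (⋃ i ∈ I, ball i ρ) n := by
  refine ⟨c, (R - 2 * ρ) / c, hc, div_pos (by linarith) hc, fun s hs hslt => ?_⟩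
  have hcs : c * s < R - 2 * ρ := by rwa [lt_div_iff₀ hc, mul_comm] at hslt
  refine dimNle_biUnion (fun i _ => (hdim i s hs).subset (ball_subset_ball hρr)) ?_
  intro i hi j hj hij a ha b hb
  linarith [hI hi hj hij, dist_triangle4 i a b j, mem_ball'.1 ha, mem_ball.1 hb]

end Net

/-- If every ball `B(x,r)` (as a metric subspace) is doubling with constant
`L` and has Nagata dimension at most `n` with constant `c` (at all scales), then `X` has
linearly controlled dimension at most `n`. -/
theorem lc_dim_from_uniform_balls {X : Type*} [MetricSpace X] (r c : ℝ) (L n : ℕ)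
    (hr : 0 < r) (hc : 0 < c)
    (hdb : ∀ x : X, ∀ s : ℝ, 0 < s → ∀ B : Set X, B ⊆ Metric.ball x r →
      (∀ a ∈ B, ∀ b ∈ B, dist a b ≤ 2 * s) →
      ∃ 𝒞 : Finset (Set X), 𝒞.card ≤ L ∧
        (∀ D ∈ 𝒞, D ⊆ Metric.ball x r ∧ ∀ a ∈ D, ∀ b ∈ D, dist a b ≤ s) ∧
        B ⊆ ⋃₀ (↑𝒞 : Set (Set X)))
    (hdim : ∀ x : X, ∀ s : ℝ, 0 < s →
      dimNle (fun a b : X => dist a b) (Metric.ball x r) c s n) :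
    ∃ c' s₀ : ℝ, 0 < c' ∧ 0 < s₀ ∧ ∀ s : ℝ, 0 < s → s < s₀ →
      dimNle (fun a b : X => dist a b) (Set.univ : Set X) c' s n := by
  obtain ⟨N, hNsep, hNnet⟩ := exists_separated_net (X := X) (δ := r / 8) (by positivity)
  obtain ⟨C, hC⟩ := exists_coloring_of_isDoublingOn_ball hr hdb hNsep
  have hclass : ∀ m, LinControlledDimLE (⋃ i ∈ {i ∈ N | C i = m}, ball i (r / 8)) n :=
    fun m => linControlledDimLE_biUnion_ball hc (by linarith) (by linarith) hdim
      fun i hi j hj hij => hC i hi.1 j hj.1 hij (hi.2.trans hj.2.symm)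
  have hcover : (⋃ m ∈ Finset.univ, ⋃ i ∈ {i ∈ N | C i = m}, ball i (r / 8)) = univ := by
    refine eq_univ_of_forall fun x => ?_
    obtain ⟨y, hy, hxy⟩ := hNnet x
    exact mem_biUnion (Finset.mem_univ (C y)) (mem_biUnion ⟨hy, rfl⟩ hxy)
  rw [← hcover]
  exact LinControlledDimLE.biUnion_finset Finset.univ fun m _ => hclass m
end

section
/- Let (X,x) be a pointed metric space, and let β ≥ 0, C > 1 and R̄ > 0. Suppose that for every ε > 0 there exist a pointed metric space (Y,y) with dim_A(Y,C,R̄) ≤ β and an ε-coupling between (X,x) and (Y,y). Then dim_A(X,C,R̄) ≤ β. (This is the statement that a pointed Gromov–Hausdorff limit of metric spaces whose Assouad dimension is at most β with constant C up to scale R̄ again has Assouad dimension at most β with constant C up to scale R̄.) -/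
open Metric Set

universe u

open Filter Topology

/-!
Fix `0 < r < R < R̄` and a centre `p ∈ X`, and take an `ε`-coupling with `(Y, y)` for small `ε`.
Move `p` to a point `q ∈ Y` at distance `< ε`, cover `B_Y(q, R + 2ε)` by at most
`C ((R + 2ε)/(r - 2ε))^β` balls of radius `r - 2ε`, and move each centre back to a point of `X`
at distance `< ε`: the triangle inequality in the coupling shows that the resulting balls of
radius `r` cover `B_X(p, R)`. As `ε → 0` the bound tends to `C (R/r)^β`, and a cardinality that is
eventually below a quantity tending to `a` is at most `a`, since it is a natural number.
-/

theorem Filter.Tendsto.eventually_forall_natCast_le {α : Type*} {l : Filter α} {f : α → ℝ}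
    {a : ℝ} (hf : Tendsto f l (𝓝 a)) :
    ∀ᶠ i in l, ∀ n : ℕ, (n : ℝ) ≤ f i → (n : ℝ) ≤ a := by
  filter_upwards [hf.eventually_lt_const (Int.lt_floor_add_one a)] with i hi n hn
  have hn_lt : ((n : ℤ) : ℝ) < ((⌊a⌋ + 1 : ℤ) : ℝ) := by push_cast; linarith
  exact_mod_cast Int.le_floor.mp (Int.lt_add_one_iff.mp (Int.cast_lt.mp hn_lt))

theorem IsCoupling.exists_cover_of_cover {A B : Type*} {dA : A → A → ℝ} {dB : B → B → ℝ}
    {a₀ : A} {b₀ : B} {ε : ℝ} {d : A ⊕ B → A ⊕ B → ℝ} (hd : IsCoupling dA dB a₀ b₀ ε d)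
    {p : A} {r R N : ℝ} (hr : 0 < r) (hR : 0 ≤ R) (hfar : dA p a₀ + R + r ≤ 1 / ε)
    (hcover : ∀ q, ∃ S : Finset B, (S.card : ℝ) ≤ N ∧
      ∀ w, dB w q < R + 2 * ε → ∃ t ∈ S, dB w t < r - 2 * ε) :
    ∃ T : Finset A, (T.card : ℝ) ≤ N ∧ ∀ z, dA z p < R → ∃ t ∈ T, dA z t < r := by
  classical
  obtain ⟨hsymm, -, htri, hA, hB, hbase, hnearA, hnearB⟩ := hd
  have : Nonempty A := ⟨p⟩
  choose! g hg using hnearB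
  obtain ⟨q, hpq⟩ := hnearA p (by linarith)
  obtain ⟨S, hSN, hS⟩ := hcover q
  refine ⟨S.image g, (Nat.cast_le.mpr Finset.card_image_le).trans hSN, fun z hz => ?_⟩
  have hza₀ : dA z a₀ < dA p a₀ + R := by
    have := htri (.inl z) (.inl p) (.inl a₀)
    rw [hA, hA, hA] at this
    linarith
  obtain ⟨z', hzz'⟩ := hnearA z (by linarith)
  have hz'q : dB z' q < R + 2 * ε := by
    have h₁ := htri (.inr z') (.inl z) (.inr q)
    have h₂ := htri (.inl z) (.inl p) (.inr q)
    rw [hB, hsymm (.inr z') (.inl z)] at h₁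
    rw [hA] at h₂
    linarith
  obtain ⟨t, htS, hz't⟩ := hS z' hz'q
  have htb₀ : dB t b₀ < 1 / ε := by
    have h₁ := htri (.inr t) (.inr z') (.inr b₀)
    have h₂ := htri (.inr z') (.inl z) (.inr b₀)
    have h₃ := htri (.inl z) (.inl a₀) (.inr b₀)
    have htz' := hsymm (.inr t) (.inr z')
    rw [hB, hB, hB] at h₁
    rw [hB, hsymm (.inr z') (.inl z)] at h₂
    rw [hA] at h₃
    rw [hB, hB] at htz'
    linarith
  refine ⟨g t, Finset.mem_image_of_mem g htS, ?_⟩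
  have h₁ := htri (.inl z) (.inr z') (.inl (g t))
  have h₂ := htri (.inr z') (.inr t) (.inl (g t))
  rw [hA] at h₁
  rw [hB, hsymm (.inr t) (.inl (g t))] at h₂
  linarith [hg t htb₀]

theorem assouad_of_gh_limit_general {X : Type*} [MetricSpace X] (x : X) (β C Rbar : ℝ)
    (h : ∀ ε : ℝ, 0 < ε → ∃ (Y : Type u) (dY : Y → Y → ℝ) (y : Y)
        (d : X ⊕ Y → X ⊕ Y → ℝ),
      IsMetricDist dY ∧ dimAle dY Set.univ C Rbar β ∧
      IsCoupling (fun a b : X => dist a b) dY x y ε d) :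
    dimAle (fun a b : X => dist a b) Set.univ C Rbar β := by
  rintro r R hr hrR hRbar p -
  have hbound : Tendsto (fun ε : ℝ => C * ((R + 2 * ε) / (r - 2 * ε)) ^ β) (𝓝[>] 0)
      (𝓝 (C * (R / r) ^ β)) := by
    have hcont : ContinuousAt (fun ε : ℝ => C * ((R + 2 * ε) / (r - 2 * ε)) ^ β) 0 :=
      continuousAt_const.mul <| (ContinuousAt.div (by fun_prop) (by fun_prop) (by simpa using
        hr.ne')).rpow_const (Or.inl (by simpa using (div_pos (hr.trans hrR) hr).ne'))
    simpa using hcont.tendsto.mono_left nhdsWithin_le_nhds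
  obtain ⟨ε, hε, hεr, hεRbar, hεfar, hεcard⟩ : ∃ ε : ℝ, 0 < ε ∧ ε < r / 2 ∧
      ε < (Rbar - R) / 2 ∧ dist p x + R + r ≤ ε⁻¹ ∧
      ∀ n : ℕ, (n : ℝ) ≤ C * ((R + 2 * ε) / (r - 2 * ε)) ^ β → (n : ℝ) ≤ C * (R / r) ^ β :=
    (eventually_mem_nhdsWithin.and <|
      ((eventually_lt_nhds (by linarith)).filter_mono nhdsWithin_le_nhds).and <|
      ((eventually_lt_nhds (by linarith)).filter_mono nhdsWithin_le_nhds).and <|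
      (tendsto_inv_nhdsGT_zero.eventually_ge_atTop _).and
        hbound.eventually_forall_natCast_le).exists
  obtain ⟨Y, dY, y, d, -, hY, hd⟩ := h ε hε
  obtain ⟨T, hTcard, hT⟩ :=
      hd.exists_cover_of_cover hr (hr.trans hrR).le (by rwa [one_div]) fun q => by
      obtain ⟨S, -, hScard, hS⟩ :=
        hY (r - 2 * ε) (R + 2 * ε) (by linarith) (by linarith) (by linarith) q (mem_univ q)
      exact ⟨S, hScard, fun w hw => hS w (mem_univ w) hw⟩
  exact ⟨T, subset_univ _, hεcard _ hTcard, fun z _ hz => hT z hz⟩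

/-- If for every `ε > 0` there is a pointed metric space `(Y,y)` with
`dim_A(Y,C,R̄) ≤ β` and an `ε`-coupling between `(X,x)` and `(Y,y)`, then
`dim_A(X,C,R̄) ≤ β`. -/
theorem assouad_of_gh_limit {X : Type*} [MetricSpace X] (x : X) (β C Rbar : ℝ)
    (hβ : 0 ≤ β) (hC : 1 < C) (hR : 0 < Rbar)
    (h : ∀ ε : ℝ, 0 < ε → ∃ (Y : Type u) (dY : Y → Y → ℝ) (y : Y)
        (d : X ⊕ Y → X ⊕ Y → ℝ),
      IsMetricDist dY ∧ dimAle dY Set.univ C Rbar β ∧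
      IsCoupling (fun a b : X => dist a b) dY x y ε d) :
    dimAle (fun a b : X => dist a b) Set.univ C Rbar β :=
  assouad_of_gh_limit_general x β C Rbar h
end

section
/- Let (X,x) be a pointed metric space, let 0 < s₁ < ∞, 0 < c < 1 and n ∈ ℕ. Suppose that for every ε > 0 there exist a pointed metric space (Y,y) satisfying dim_N(Y,c,s) ≤ n for all 0 < s ≤ s₁, and an ε-coupling between (X,x) and (Y,y). Then for every 0 < c' < c²/5 we have dim_N(X,c',s) ≤ n for all 0 < s < (1 + (2/3)c)s₁. (This is the statement that a pointed Gromov–Hausdorff limit of metric spaces with Nagata dimension at most n with constant c at all scales up to s₁ again has Nagata dimension at most n, with any constant c' < c²/5, at all scales up to (1 + (2/3)c)s₁.) -/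
open Metric Set

universe u

/-- If for every `ε > 0` there is a pointed metric space `(Y,y)` with
`dim_N(Y,c,s) ≤ n` for all `0 < s ≤ s₁` and an `ε`-coupling between `(X,x)` and `(Y,y)`,
then for every `0 < c' < c²/5` one has `dim_N(X,c',s) ≤ n` for all
`0 < s < (1 + (2/3)c)s₁`. -/
theorem nagata_of_gh_limit {X : Type*} [MetricSpace X] (x : X) (s₁ c : ℝ) (n : ℕ)
    (hs₁ : 0 < s₁) (hc : c ∈ Set.Ioo (0:ℝ) 1)
    (h : ∀ ε : ℝ, 0 < ε → ∃ (Y : Type u) (dY : Y → Y → ℝ) (y : Y)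
        (d : X ⊕ Y → X ⊕ Y → ℝ),
      IsMetricDist dY ∧ (∀ s : ℝ, 0 < s → s ≤ s₁ → dimNle dY Set.univ c s n) ∧
      IsCoupling (fun a b : X => dist a b) dY x y ε d) :
    ∀ c' : ℝ, 0 < c' → c' < c ^ 2 / 5 → ∀ s : ℝ, 0 < s → s < (1 + (2/3) * c) * s₁ →
      dimNle (fun a b : X => dist a b) Set.univ c' s n := by
  classical
  obtain ⟨hc0, hc1⟩ := hc
  intro c' hc'0 hc'lt s hs0 hss
  -- choose the scale s' in Y
  set s' : ℝ := min (3/4 * s) s₁ with hs'def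
  have hs'0 : 0 < s' := lt_min (by linarith) hs₁
  have hs'le : s' ≤ s₁ := min_le_right _ _
  have hs'lt : s' < s := lt_of_le_of_lt (min_le_left _ _) (by linarith)
  have hkey : c' * s < c * s' := by
    rcases le_total (3/4 * s) s₁ with h1 | h1
    · have he : s' = 3/4 * s := min_eq_left h1
      rw [he]
      nlinarith [mul_pos hc0 hs0, sq_nonneg c]
    · have he : s' = s₁ := min_eq_right h1
      rw [he]
      nlinarith [mul_pos hc0 hs₁, mul_pos hc'0 hs0, mul_pos (mul_pos hc0 hc0) hs₁,
        mul_lt_mul_of_pos_left hss hc'0, mul_pos hc0 hs0]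
  set ε₀ : ℝ := min ((s - s')/2) ((c*s' - c'*s)/2) with hε₀def
  have hε₀0 : 0 < ε₀ := lt_min (by linarith) (by linarith)
  have hε₀1 : ε₀ ≤ (s - s')/2 := min_le_left _ _
  have hε₀2 : ε₀ ≤ (c*s' - c'*s)/2 := min_le_right _ _
  set ε : ℕ → ℝ := fun j => min ε₀ (1/((j:ℝ)+1)) with hεdef
  have hε0 : ∀ j, 0 < ε j := fun j => lt_min hε₀0 (by positivity)
  have hεle : ∀ j, ε j ≤ ε₀ := fun j => min_le_left _ _
  have hεinv : ∀ j : ℕ, (j:ℝ) + 1 ≤ 1 / ε j := by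
    intro j
    have h1 : ε j ≤ 1/((j:ℝ)+1) := min_le_right _ _
    have h2 : (0:ℝ) < (j:ℝ)+1 := by positivity
    rw [le_div_iff₀ (hε0 j)]
    calc ((j:ℝ)+1) * ε j ≤ ((j:ℝ)+1) * (1/((j:ℝ)+1)) := by
          exact mul_le_mul_of_nonneg_left h1 (le_of_lt h2)
      _ = 1 := by field_simp
  choose Y dY y d hMet hDim hCoup using fun j : ℕ => h (ε j) (hε0 j)
  have H2 : ∀ j, ∃ 𝒱 : Fin (n + 1) → Set (Set (Y j)),
      (∀ k, ∀ U ∈ 𝒱 k, U ⊆ Set.univ) ∧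
      (∀ p ∈ (Set.univ : Set (Y j)), ∃ k, ∃ U ∈ 𝒱 k, p ∈ U) ∧
      (∀ k, ∀ U ∈ 𝒱 k, ∀ a ∈ U, ∀ b ∈ U, dY j a b ≤ s') ∧
      (∀ k, ∀ U ∈ 𝒱 k, ∀ V ∈ 𝒱 k, U ≠ V → ∀ a ∈ U, ∀ b ∈ V, c * s' ≤ dY j a b) :=
    fun j => hDim j s' hs'0 hs'le
  choose 𝒱 _hsub hcov hdiam hsep using H2
  have dsymm : ∀ j p q, d j p q = d j q p := fun j => (hCoup j).1
  have dtri : ∀ j p q r, d j p r ≤ d j p q + d j q r := fun j => (hCoup j).2.2.1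
  have dXX : ∀ j (u v : X), d j (Sum.inl u) (Sum.inl v) = dist u v :=
    fun j => (hCoup j).2.2.2.1
  have dYY : ∀ j (u v : Y j), d j (Sum.inr u) (Sum.inr v) = dY j u v :=
    fun j => (hCoup j).2.2.2.2.1
  have dnear : ∀ j (u : X), dist u x < 1/ε j →
      ∃ v : Y j, d j (Sum.inl u) (Sum.inr v) < ε j :=
    fun j => (hCoup j).2.2.2.2.2.2.1
  -- choose, for each j and p, a color and a pulled-back set
  have key : ∀ (j : ℕ) (p : X), ∃ (k : Fin (n+1)) (Wp : Set X),
      dist p x < 1/ε j →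
        ∃ V ∈ 𝒱 j k, Wp = {q : X | ∃ w ∈ V, d j (Sum.inl q) (Sum.inr w) < ε j} ∧ p ∈ Wp := by
    intro j p
    by_cases hg : dist p x < 1/ε j
    · obtain ⟨v, hv⟩ := dnear j p hg
      obtain ⟨k, V, hV, hvV⟩ := hcov j v (Set.mem_univ v)
      exact ⟨k, {q : X | ∃ w ∈ V, d j (Sum.inl q) (Sum.inr w) < ε j},
        fun _ => ⟨V, hV, rfl, ⟨v, hvV, hv⟩⟩⟩
    · exact ⟨0, ∅, fun hg' => absurd hg' hg⟩
  choose K W hKW using key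
  -- diameter estimate
  have diamW : ∀ j (a b : X), dist a x < 1/ε j → dist b x < 1/ε j →
      W j a = W j b → dist a b ≤ s' + 2 * ε j := by
    intro j a b hga hgb hW
    obtain ⟨Va, hVa, hWa, haW⟩ := hKW j a hga
    obtain ⟨Vb, hVb, hWb, hbW⟩ := hKW j b hgb
    rw [hW, hWb] at haW
    rw [hWb] at hbW
    obtain ⟨w, hwV, hw⟩ := haW
    obtain ⟨w', hw'V, hw'⟩ := hbW
    have h1 : dY j w w' ≤ s' := hdiam j (K j b) Vb hVb w hwV w' hw'V
    have t1 := dtri j (Sum.inl a) (Sum.inr w) (Sum.inl b)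
    have t2 := dtri j (Sum.inr w) (Sum.inr w') (Sum.inl b)
    have e1 := dXX j a b
    have e2 := dYY j w w'
    have e3 := dsymm j (Sum.inr w') (Sum.inl b)
    linarith
  -- separation estimate
  have sepW : ∀ j (a b : X), dist a x < 1/ε j → dist b x < 1/ε j →
      K j a = K j b → W j a ≠ W j b → c * s' - 2 * ε j ≤ dist a b := by
    intro j a b hga hgb hK hW
    obtain ⟨Va, hVa, hWa, haW⟩ := hKW j a hga
    obtain ⟨Vb, hVb, hWb, hbW⟩ := hKW j b hgb
    have hVne : Va ≠ Vb := by
      rintro rfl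
      exact hW (hWa.trans hWb.symm)
    rw [hWa] at haW
    rw [hWb] at hbW
    obtain ⟨w, hwV, hw⟩ := haW
    obtain ⟨w', hw'V, hw'⟩ := hbW
    have hVb' : Vb ∈ 𝒱 j (K j a) := hK ▸ hVb
    have h1 : c * s' ≤ dY j w w' := hsep j (K j a) Va hVa Vb hVb' hVne w hwV w' hw'V
    have t1 := dtri j (Sum.inr w) (Sum.inl a) (Sum.inr w')
    have t2 := dtri j (Sum.inl a) (Sum.inl b) (Sum.inr w')
    have e1 := dXX j a b
    have e2 := dYY j w w'
    have e3 := dsymm j (Sum.inl a) (Sum.inr w)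
    linarith
  -- an ultrafilter extending atTop
  obtain ⟨𝓤, h𝓤⟩ : ∃ 𝓤 : Ultrafilter ℕ, (𝓤 : Filter ℕ) ≤ Filter.atTop :=
    ⟨Ultrafilter.of Filter.atTop, Ultrafilter.of_le _⟩
  have hGood : ∀ p : X, {j | dist p x < 1/ε j} ∈ 𝓤 := by
    intro p
    apply h𝓤
    obtain ⟨N, hN⟩ := exists_nat_gt (dist p x)
    filter_upwards [Filter.eventually_ge_atTop N] with j hj
    have h1 : (N:ℝ) ≤ (j:ℝ) := by exact_mod_cast hj
    have h2 := hεinv j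
    linarith
  -- the relation R
  have Rsymm : ∀ p q : X, {j | K j p = K j q ∧ W j p = W j q} ∈ 𝓤 →
      {j | K j q = K j p ∧ W j q = W j p} ∈ 𝓤 := by
    intro p q hpq
    apply Filter.mem_of_superset hpq
    rintro j ⟨h1, h2⟩
    exact ⟨h1.symm, h2.symm⟩
  have Rtrans : ∀ p q r : X, {j | K j p = K j q ∧ W j p = W j q} ∈ 𝓤 →
      {j | K j q = K j r ∧ W j q = W j r} ∈ 𝓤 →
      {j | K j p = K j r ∧ W j p = W j r} ∈ 𝓤 := by
    intro p q r h1 h2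
    apply Filter.mem_of_superset (Filter.inter_mem h1 h2)
    rintro j ⟨⟨ha, hb⟩, ⟨hc', hd⟩⟩
    exact ⟨ha.trans hc', hb.trans hd⟩
  have Rrefl : ∀ p : X, {j | K j p = K j p ∧ W j p = W j p} ∈ 𝓤 := by
    intro p
    apply Filter.mem_of_superset Filter.univ_mem
    intro j _
    exact ⟨rfl, rfl⟩
  -- the limiting color
  have hKlimEx : ∀ p : X, ∃ k, {j | K j p = k} ∈ 𝓤 := by
    intro p
    by_contra hcon
    push_neg at hcon
    have h1 : ∀ k : Fin (n+1), {j | K j p = k}ᶜ ∈ 𝓤 :=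
      fun k => (Ultrafilter.compl_mem_iff_notMem).2 (hcon k)
    have h2 : (⋂ k : Fin (n+1), {j | K j p = k}ᶜ) ∈ 𝓤 :=
      (Filter.iInter_mem).2 h1
    have h3 : (⋂ k : Fin (n+1), {j | K j p = k}ᶜ) = ∅ := by
      ext j
      simp only [Set.mem_iInter, Set.mem_compl_iff, Set.mem_setOf_eq, Set.mem_empty_iff_false,
        iff_false, not_forall, not_not]
      exact ⟨K j p, rfl⟩
    rw [h3] at h2
    exact Filter.empty_notMem (𝓤 : Filter ℕ) h2
  choose Klim hKlim using hKlimEx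
  have Kuniq : ∀ (p : X) (k k' : Fin (n+1)), {j | K j p = k} ∈ 𝓤 →
      {j | K j p = k'} ∈ 𝓤 → k = k' := by
    intro p k k' h1 h2
    obtain ⟨j, hj1, hj2⟩ := Ultrafilter.nonempty_of_mem (Filter.inter_mem h1 h2)
    exact hj1.symm.trans hj2
  have KlimR : ∀ p q : X, {j | K j p = K j q ∧ W j p = W j q} ∈ 𝓤 → Klim q = Klim p := by
    intro p q hpq
    apply Kuniq q _ _ (hKlim q)
    apply Filter.mem_of_superset (Filter.inter_mem hpq (hKlim p))
    rintro j ⟨⟨h1, _⟩, h2⟩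
    exact h1.symm.trans h2
  -- the final cover
  refine ⟨fun k => {C | ∃ p : X, Klim p = k ∧
      C = {q | {j | K j p = K j q ∧ W j p = W j q} ∈ 𝓤}}, ?_, ?_, ?_, ?_⟩
  · intro k U _
    exact Set.subset_univ U
  · intro p _
    exact ⟨Klim p, {q | {j | K j p = K j q ∧ W j p = W j q} ∈ 𝓤},
      ⟨p, rfl, rfl⟩, Rrefl p⟩
  · rintro k U ⟨p, hk, rfl⟩ a ha b hb
    simp only [Set.mem_setOf_eq] at ha hb
    have hab : {j | K j a = K j b ∧ W j a = W j b} ∈ 𝓤 :=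
      Rtrans a p b (Rsymm p a ha) hb
    obtain ⟨j, ⟨⟨hKj, hWj⟩, hga⟩, hgb⟩ :=
      Ultrafilter.nonempty_of_mem
        (Filter.inter_mem (Filter.inter_mem hab (hGood a)) (hGood b))
    have h1 := diamW j a b hga hgb hWj
    have h2 := hεle j
    show dist a b ≤ s
    linarith
  · rintro k U ⟨p, hkp, rfl⟩ V ⟨q, hkq, rfl⟩ hUV a ha b hb
    simp only [Set.mem_setOf_eq] at ha hb
    have hnab : ¬ {j | K j a = K j b ∧ W j a = W j b} ∈ 𝓤 := by
      intro hab
      apply hUV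
      have hpq : {j | K j p = K j q ∧ W j p = W j q} ∈ 𝓤 :=
        Rtrans p a q ha (Rtrans a b q hab (Rsymm q b hb))
      ext r
      simp only [Set.mem_setOf_eq]
      exact ⟨fun hr => Rtrans q p r (Rsymm p q hpq) hr, fun hr => Rtrans p q r hpq hr⟩
    have hka : Klim a = k := (KlimR p a ha).trans hkp
    have hkb : Klim b = k := (KlimR q b hb).trans hkq
    have hA : {j | K j a = k} ∈ 𝓤 := by rw [← hka]; exact hKlim a
    have hB : {j | K j b = k} ∈ 𝓤 := by rw [← hkb]; exact hKlim b
    have hC : {j | K j a = K j b ∧ W j a = W j b}ᶜ ∈ 𝓤 :=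
      (Ultrafilter.compl_mem_iff_notMem).2 hnab
    obtain ⟨j, ⟨⟨⟨hne, hKa⟩, hKb⟩, hga⟩, hgb⟩ :=
      Ultrafilter.nonempty_of_mem
        (Filter.inter_mem
          (Filter.inter_mem (Filter.inter_mem (Filter.inter_mem hC hA) hB) (hGood a))
          (hGood b))
    have hKeq : K j a = K j b := hKa.trans hKb.symm
    have hWne : W j a ≠ W j b := fun hWeq => hne ⟨hKeq, hWeq⟩
    have h1 := sepW j a b hga hgb hKeq hWne
    have h2 := hεle j
    show c' * s ≤ dist a b
    linarith
end

section
/- Let Z be a metric space, let X, Y ⊆ Z, x ∈ X, y ∈ Y, let δ ∈ (0,1) and set ε = δ/4. Assume d(x,y) ≤ ε, that every point of B_X(x,1/ε) is within distance < ε of some point of Y, and that every point of B_Y(y,1/ε) is within distance < ε of some point of X. Suppose moreover that the ball B_Y(y,2) can be covered by L balls of radius δ/2 with centers in Y, for some L ∈ ℕ. Then the ball B_X(x,1) can be covered by L balls of radius δ with centers in X. -/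
open Metric Set

/-- If `(X,x)` and `(Y,y)` are at Gromov–Hausdorff distance at most
`ε = δ/4` inside `Z` and `B_Y(y,2)` can be covered by `L` balls of radius `δ/2` with
centers in `Y`, then `B_X(x,1)` can be covered by `L` balls of radius `δ` with centers
in `X`. -/
theorem ball_cover_transfer {Z : Type*} [MetricSpace Z] (X Y : Set Z) (x y : Z)
    (hx : x ∈ X) (hy : y ∈ Y) (δ : ℝ) (hδ : δ ∈ Set.Ioo (0:ℝ) 1)
    (hxy : dist x y ≤ δ / 4)
    (hXY : ∀ a ∈ X, dist a x < 1 / (δ / 4) → ∃ b ∈ Y, dist a b < δ / 4)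
    (hYX : ∀ b ∈ Y, dist b y < 1 / (δ / 4) → ∃ a ∈ X, dist b a < δ / 4)
    (L : ℕ)
    (hcov : ∃ T : Finset Z, ↑T ⊆ Y ∧ T.card ≤ L ∧
      ∀ z ∈ Y, dist z y < 2 → ∃ t ∈ T, dist z t < δ / 2) :
    ∃ T : Finset Z, ↑T ⊆ X ∧ T.card ≤ L ∧
      ∀ z ∈ X, dist z x < 1 → ∃ t ∈ T, dist z t < δ := by
  obtain ⟨hδ0, hδ1⟩ := hδ
  obtain ⟨T, hTY, hTc, hT⟩ := hcov
  classical
  have key : ∀ t ∈ Y, dist t y < 1 / (δ / 4) → ∃ a ∈ X, dist t a < δ / 4 := hYX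
  set f : Z → Z := fun t =>
    if h : t ∈ Y ∧ dist t y < 1 / (δ / 4) then (key t h.1 h.2).choose else x with hf
  have hfX : ∀ t, f t ∈ X := by
    intro t
    by_cases h : t ∈ Y ∧ dist t y < 1 / (δ / 4)
    · simp only [hf, dif_pos h]; exact (key t h.1 h.2).choose_spec.1
    · simp only [hf, dif_neg h]; exact hx
  refine ⟨T.image f, ?_, le_trans (Finset.card_image_le) hTc, ?_⟩
  · intro a ha
    simp only [Finset.coe_image, Set.mem_image] at ha
    obtain ⟨t, _, rfl⟩ := ha
    exact hfX t
  · intro z hz hzx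
    have h4 : (4:ℝ) < 1 / (δ / 4) := by
      rw [lt_div_iff₀ (by linarith)]; nlinarith
    obtain ⟨b, hbY, hzb⟩ := hXY z hz (by linarith)
    have hby : dist b y < 2 := by
      have := dist_triangle b z x
      have := dist_triangle b x y
      have h1 : dist b z = dist z b := dist_comm b z
      linarith [dist_triangle b z y, dist_triangle z x y, dist_comm b z, dist_comm z b]
    obtain ⟨t, htT, hbt⟩ := hT b hbY hby
    have htY : t ∈ Y := hTY htT
    have hty : dist t y < 1 / (δ / 4) := by
      have := dist_triangle t b y
      have := dist_comm t b
      linarith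
    have h : t ∈ Y ∧ dist t y < 1 / (δ / 4) := ⟨htY, hty⟩
    have hft : dist t (f t) < δ / 4 := by
      simp only [hf, dif_pos h]; exact (key t h.1 h.2).choose_spec.2
    refine ⟨f t, Finset.mem_image_of_mem f htT, ?_⟩
    calc dist z (f t) ≤ dist z b + dist b t + dist t (f t) := dist_triangle4 z b t (f t)
      _ < δ / 4 + δ / 2 + δ / 4 := by gcongr
      _ = δ := by ring
end

section
/- Let Z be a metric space, let X, Y ⊆ Z, x ∈ X, y ∈ Y and ε > 0. Assume d(x,y) ≤ ε, that every point of B_X(x,1/ε) is within distance < ε of some point of Y, and that every point of B_Y(y,1/ε) is within distance < ε of some point of X. Suppose that for some r, s > 0, c ∈ (0,1) and n ∈ ℕ one has dim_N(B_Y(y,r),c,s) ≤ n. Then, for every r' ≤ min{1/ε, r − 2ε}, setting c' = (cs − 2ε)/(s + 2ε) and s' = s + 2ε, one has dim_N(B_X(x,r'),c',s') ≤ n. -/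
open Metric Set

/-!
Thicken each member of a Nagata cover of `B_Y(y,r)` by `ε` and intersect it with `B_X(x,r')`.
Thickening by `ε` raises diameters by at most `2ε` and lowers mutual distances by at most `2ε`,
and the thickened sets still cover `B_X(x,r')`: a point there lies within `ε` of a point of `Y`,
which belongs to `B_Y(y,r)` because `r' + 2ε ≤ r`.
-/

section NagataThickening

variable {Z : Type*} [PseudoMetricSpace Z] {δ : ℝ}

theorem dist_le_add_of_mem_thickening {U : Set Z} {s : ℝ}
    (hU : ∀ u ∈ U, ∀ v ∈ U, dist u v ≤ s) {a b : Z}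
    (ha : a ∈ thickening δ U) (hb : b ∈ thickening δ U) : dist a b ≤ s + 2 * δ := by
  obtain ⟨u, hu, hau⟩ := mem_thickening_iff.mp ha
  obtain ⟨v, hv, hbv⟩ := mem_thickening_iff.mp hb
  calc dist a b ≤ dist a u + dist u v + dist v b := dist_triangle4 a u v b
    _ ≤ s + 2 * δ := by linarith [hU u hu v hv, dist_comm v b]

theorem sub_le_dist_of_mem_thickening {U V : Set Z} {t : ℝ}
    (hUV : ∀ u ∈ U, ∀ v ∈ V, t ≤ dist u v) {a b : Z}
    (ha : a ∈ thickening δ U) (hb : b ∈ thickening δ V) : t - 2 * δ ≤ dist a b := by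
  obtain ⟨u, hu, hau⟩ := mem_thickening_iff.mp ha
  obtain ⟨v, hv, hbv⟩ := mem_thickening_iff.mp hb
  have := dist_triangle4 u a b v
  linarith [hUV u hu v hv, dist_comm u a]

theorem dimNle_of_forall_exists_dist_lt {A B : Set Z} {c s c' s' : ℝ} {n : ℕ}
    (hAB : ∀ a ∈ A, ∃ b ∈ B, dist a b < δ) (hB : dimNle (fun a b : Z => dist a b) B c s n)
    (hs' : s + 2 * δ ≤ s') (hcs' : c' * s' ≤ c * s - 2 * δ) :
    dimNle (fun a b : Z => dist a b) A c' s' n := by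
  obtain ⟨𝒰, -, hcov, hdiam, hsep⟩ := hB
  refine ⟨fun k => (fun U => A ∩ thickening δ U) '' 𝒰 k, ?_, ?_, ?_, ?_⟩
  · rintro k _ ⟨U, -, rfl⟩
    exact inter_subset_left
  · intro a ha
    obtain ⟨b, hb, hab⟩ := hAB a ha
    obtain ⟨k, U, hU, hbU⟩ := hcov b hb
    exact ⟨k, _, ⟨U, hU, rfl⟩, ha, mem_thickening_iff.mpr ⟨b, hbU, hab⟩⟩
  · rintro k _ ⟨U, hU, rfl⟩ a ⟨-, ha⟩ b ⟨-, hb⟩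
    exact (dist_le_add_of_mem_thickening (hdiam k U hU) ha hb).trans hs'
  · rintro k _ ⟨U, hU, rfl⟩ _ ⟨V, hV, rfl⟩ hne a ⟨-, ha⟩ b ⟨-, hb⟩
    have hUV : U ≠ V := by rintro rfl; exact hne rfl
    exact hcs'.trans (sub_le_dist_of_mem_thickening (hsep k U hU V hV hUV) ha hb)

end NagataThickening

theorem nagata_transfer_for_tangents_general {Z : Type*} [MetricSpace Z] (X Y : Set Z)
    (x y : Z) (ε : ℝ) (hε : 0 < ε)
    (hxy : dist x y ≤ ε)
    (hXY : ∀ a ∈ X, dist a x < 1 / ε → ∃ b ∈ Y, dist a b < ε)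
    (r s c : ℝ) (n : ℕ) (hs : 0 < s)
    (hdim : dimNle (fun a b : Z => dist a b) (Y ∩ Metric.ball y r) c s n) :
    ∀ r' : ℝ, r' ≤ min (1 / ε) (r - 2 * ε) →
      dimNle (fun a b : Z => dist a b) (X ∩ Metric.ball x r')
        ((c * s - 2 * ε) / (s + 2 * ε)) (s + 2 * ε) n := by
  intro r' hr'
  have hr'ε : r' ≤ 1 / ε := hr'.trans (min_le_left _ _)
  have hr'r : r' ≤ r - 2 * ε := hr'.trans (min_le_right _ _)
  refine dimNle_of_forall_exists_dist_lt (δ := ε) ?_ hdim le_rfl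
    (div_mul_cancel₀ _ (by positivity)).le
  rintro a ⟨haX, hax⟩
  rw [mem_ball] at hax
  obtain ⟨b, hbY, hab⟩ := hXY a haX (hax.trans_le hr'ε)
  refine ⟨b, ⟨hbY, mem_ball.mpr ?_⟩, hab⟩
  calc dist b y ≤ dist b a + dist a x + dist x y := dist_triangle4 b a x y
    _ < ε + r' + ε := by linarith [dist_comm a b]
    _ ≤ r := by linarith

/-- If `(X,x)` and `(Y,y)` are at Gromov–Hausdorff distance at most `ε`
inside `Z` and `dim_N(B_Y(y,r),c,s) ≤ n`, then for every `r' ≤ min{1/ε, r − 2ε}` one has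
`dim_N(B_X(x,r'), (cs − 2ε)/(s + 2ε), s + 2ε) ≤ n`. -/
theorem nagata_transfer_for_tangents {Z : Type*} [MetricSpace Z] (X Y : Set Z)
    (x y : Z) (hx : x ∈ X) (hy : y ∈ Y) (ε : ℝ) (hε : 0 < ε)
    (hxy : dist x y ≤ ε)
    (hXY : ∀ a ∈ X, dist a x < 1 / ε → ∃ b ∈ Y, dist a b < ε)
    (hYX : ∀ b ∈ Y, dist b y < 1 / ε → ∃ a ∈ X, dist b a < ε)
    (r s c : ℝ) (n : ℕ) (hr : 0 < r) (hs : 0 < s) (hc : c ∈ Set.Ioo (0:ℝ) 1)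
    (hdim : dimNle (fun a b : Z => dist a b) (Y ∩ Metric.ball y r) c s n) :
    ∀ r' : ℝ, r' ≤ min (1 / ε) (r - 2 * ε) →
      dimNle (fun a b : Z => dist a b) (X ∩ Metric.ball x r')
        ((c * s - 2 * ε) / (s + 2 * ε)) (s + 2 * ε) n :=
  nagata_transfer_for_tangents_general X Y x y ε hε hxy hXY r s c n hs hdim
end

section
/- For every choice of constants n̄, n ∈ ℕ, s̄, s₀ ∈ (0,∞], a, b > 0 and c, c̄ ∈ (0,1) there exists ε ∈ (0,1/8) such that the following holds. Let X be a metric space and K ⊆ X. Suppose that dim_N(K,c̄,s) ≤ n̄ for all 0 < s ≤ s̄, and that there exists r_ε > 0 such that for all x ∈ K, all r ∈ (0, r_ε) and all s ∈ (0, s₀) one has dim_N(B_X(x,r/2), (cas − bε)/(as + bε), r(as + bε)) ≤ n. Then K has linearly controlled dimension at most n: there exist c' > 0 and t₀ > 0 such that dim_N(K,c',t) ≤ n for all 0 < t < t₀. -/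
open Metric Set ENNReal

universe u

/-!
Cut `K` by a Nagata cover at a small scale `σ`, with colours `0, …, n̄`. The `m`-th colour class
is separated, and its members are small enough to lie in balls `B(x, r_m / 2)`, `x ∈ K`, so
intersecting them with the pieces of the `(n+1)`-coloured covers of these balls gives an
`(n+1)`-coloured cover of the `m`-th class at the scale `r_m = q^m r₀`. The levels are then
merged one at a time: each set of the cover built so far absorbs the pieces of the next level
that come within that level's separation of it. Since `q` is small, the separation of level `m`
exceeds the diameter plus twice the separation of level `m + 1`, so colour classes stay
separated, while the diameters add up to a geometric series. The result is an `(n+1)`-coloured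
cover of `K` of diameter `≲ r₀` and separation `≳ q^n̄ r₀`.
-/

theorem geom_sum_le_two {q : ℝ} (hq0 : 0 ≤ q) (hq : q ≤ 1 / 2) (n : ℕ) :
    ∑ m ∈ Finset.range n, q ^ m ≤ 2 := by
  rw [Finset.range_eq_Ico]
  refine (geom_sum_Ico_le_of_lt_one hq0 (by linarith)).trans ?_
  rw [pow_zero, div_le_iff₀ (by linarith)]
  linarith

theorem biUnion_le_natCast_eq_iUnion {α : Type*} {N : ℕ} (f : Fin (N + 1) → Set α) :
    ⋃ m ≤ N, f (Fin.ofNat (N + 1) m) = ⋃ k, f k := by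
  ext x
  simp only [mem_iUnion, exists_prop]
  constructor
  · rintro ⟨m, -, hx⟩
    exact ⟨_, hx⟩
  · rintro ⟨k, hx⟩
    exact ⟨k, Nat.lt_succ_iff.1 k.isLt, by rwa [Fin.ofNat_val_eq_self]⟩

theorem ENNReal.exists_pos_lt_ofReal_lt {s₀ : ℝ≥0∞} (hs₀ : 0 < s₀) {M : ℝ} (hM : 0 < M) :
    ∃ s : ℝ, 0 < s ∧ s < M ∧ ENNReal.ofReal s < s₀ := by
  obtain ⟨r, -, hr0, hrs₀⟩ := ENNReal.lt_iff_exists_real_btwn.1 hs₀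
  exact ⟨min r (M / 2), lt_min (ENNReal.ofReal_pos.1 hr0) (by linarith),
    (min_le_right _ _).trans_lt (by linarith),
    (ENNReal.ofReal_le_ofReal (min_le_left _ _)).trans_lt hrs₀⟩

section Covers

variable {X : Type*} [MetricSpace X]

def DiamLe (𝒰 : Set (Set X)) (D : ℝ) : Prop :=
  ∀ U ∈ 𝒰, ∀ x ∈ U, ∀ y ∈ U, dist x y ≤ D

def Separated (𝒰 : Set (Set X)) (g : ℝ) : Prop :=
  𝒰.Pairwise fun U V => ∀ x ∈ U, ∀ y ∈ V, g ≤ dist x y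

structure IsNagataCover {ι : Type*} (𝒰 : ι → Set (Set X)) (A : Set X) (D g : ℝ) : Prop where
  iUnion_sUnion : ⋃ k, ⋃₀ 𝒰 k = A
  diamLe : ∀ k, DiamLe (𝒰 k) D
  separated : ∀ k, Separated (𝒰 k) g

theorem IsNagataCover.mono {ι : Type*} {𝒰 : ι → Set (Set X)} {A : Set X} {D D' g g' : ℝ}
    (h : IsNagataCover 𝒰 A D g) (hD : D ≤ D') (hg : g' ≤ g) : IsNagataCover 𝒰 A D' g' where
  iUnion_sUnion := h.iUnion_sUnion
  diamLe k U hU x hx y hy := (h.diamLe k U hU x hx y hy).trans hD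
  separated k _ hU _ hV hUV x hx y hy := hg.trans (h.separated k hU hV hUV x hx y hy)

theorem dimNle_iff_exists_isNagataCover {A : Set X} {c s : ℝ} {n : ℕ} :
    dimNle (fun p q : X => dist p q) A c s n ↔
      ∃ 𝒰 : Fin (n + 1) → Set (Set X), IsNagataCover 𝒰 A s (c * s) := by
  constructor
  · rintro ⟨𝒰, hsub, hcov, hdiam, hsep⟩
    refine ⟨𝒰, ⟨?_, hdiam, fun k U hU V hV hUV => hsep k U hU V hV hUV⟩⟩
    refine Subset.antisymm (iUnion_subset fun k => sUnion_subset (hsub k)) fun p hp => ?_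
    obtain ⟨k, U, hU, hpU⟩ := hcov p hp
    exact mem_iUnion.2 ⟨k, U, hU, hpU⟩
  · rintro ⟨𝒰, hunion, hdiam, hsep⟩
    refine ⟨𝒰, fun k U hU => ?_, fun p hp => ?_, hdiam, fun k U hU V hV hUV => hsep k hU hV hUV⟩
    · exact hunion ▸ subset_iUnion_of_subset k (subset_sUnion_of_mem hU)
    · obtain ⟨k, U, hU, hpU⟩ := mem_iUnion.1 (hunion.symm ▸ hp : p ∈ ⋃ k, ⋃₀ 𝒰 k)
      exact ⟨k, U, hU, hpU⟩

end Covers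

section Absorb

variable {X : Type*} [MetricSpace X] {𝒜 ℬ : Set (Set X)} {α β g : ℝ}

def IsNear (g : ℝ) (V U : Set X) : Prop :=
  ∃ v ∈ V, ∃ u ∈ U, dist v u < g

def absorbed (ℬ : Set (Set X)) (g : ℝ) (U : Set X) : Set X :=
  U ∪ ⋃₀ {V ∈ ℬ | IsNear g V U}

def absorb (𝒜 ℬ : Set (Set X)) (g : ℝ) : Set (Set X) :=
  absorbed ℬ g '' 𝒜 ∪ {V ∈ ℬ | ∀ U ∈ 𝒜, ¬IsNear g V U}

theorem mem_absorbed {U : Set X} {x : X} :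
    x ∈ absorbed ℬ g U ↔ x ∈ U ∨ ∃ V ∈ ℬ, IsNear g V U ∧ x ∈ V := by
  simp only [absorbed, mem_union, mem_sUnion, mem_sep_iff, and_assoc]

theorem sUnion_absorb : ⋃₀ absorb 𝒜 ℬ g = ⋃₀ 𝒜 ∪ ⋃₀ ℬ := by
  refine Subset.antisymm (sUnion_subset ?_) (union_subset (sUnion_subset fun U hU => ?_) ?_)
  · rintro _ (⟨U, hU, rfl⟩ | ⟨hV, -⟩) x hx
    · rcases mem_absorbed.1 hx with hxU | ⟨V, hV, -, hxV⟩
      exacts [Or.inl ⟨U, hU, hxU⟩, Or.inr ⟨V, hV, hxV⟩]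
    · exact Or.inr ⟨_, hV, hx⟩
  · exact subset_sUnion_of_subset _ _ subset_union_left (Or.inl ⟨U, hU, rfl⟩)
  · rintro x ⟨V, hV, hxV⟩
    by_cases hnear : ∃ U ∈ 𝒜, IsNear g V U
    · obtain ⟨U, hU, hVU⟩ := hnear
      exact ⟨_, Or.inl ⟨U, hU, rfl⟩, mem_absorbed.2 (Or.inr ⟨V, hV, hVU, hxV⟩)⟩
    · push Not at hnear
      exact ⟨V, Or.inr ⟨hV, hnear⟩, hxV⟩

theorem exists_dist_le_of_mem_absorbed (hℬ : DiamLe ℬ β) (hβ : 0 ≤ β) (hg : 0 ≤ g)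
    {U : Set X} {x : X} (hx : x ∈ absorbed ℬ g U) : ∃ u ∈ U, dist x u ≤ g + β := by
  rcases mem_absorbed.1 hx with hxU | ⟨V, hV, ⟨v, hv, u, hu, hvu⟩, hxV⟩
  · exact ⟨x, hxU, by rw [dist_self]; positivity⟩
  · refine ⟨u, hu, ?_⟩
    linarith [dist_triangle x v u, hℬ V hV x hxV v hv]

theorem diamLe_absorb (h𝒜 : DiamLe 𝒜 α) (hℬ : DiamLe ℬ β) (hα : 0 ≤ α) (hβ : 0 ≤ β)
    (hg : 0 ≤ g) : DiamLe (absorb 𝒜 ℬ g) (α + 2 * g + 2 * β) := by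
  rintro _ (⟨U, hU, rfl⟩ | ⟨hW, -⟩) x hx y hy
  · obtain ⟨u, hu, hxu⟩ := exists_dist_le_of_mem_absorbed hℬ hβ hg hx
    obtain ⟨u', hu', hyu'⟩ := exists_dist_le_of_mem_absorbed hℬ hβ hg hy
    linarith [dist_triangle4 x u u' y, dist_comm y u', h𝒜 U hU u hu u' hu']
  · linarith [hℬ _ hW x hx y hy]

theorem le_dist_of_isNear (hℬ : DiamLe ℬ β) {U U' V : Set X}
    (hUU' : ∀ x ∈ U, ∀ u' ∈ U', 2 * g + β ≤ dist x u') (hV : V ∈ ℬ) (hVU' : IsNear g V U')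
    {x y : X} (hx : x ∈ U) (hy : y ∈ V) : g ≤ dist x y := by
  obtain ⟨v, hv, u', hu', hvu'⟩ := hVU'
  linarith [hUU' x hx u' hu', dist_triangle4 x y v u', hℬ V hV y hy v hv]

theorem le_dist_of_mem_absorbed (h𝒜 : Separated 𝒜 (2 * g + β)) (hℬd : DiamLe ℬ β)
    (hℬ : Separated ℬ g) (hβ : 0 ≤ β) (hg : 0 ≤ g) {U U' : Set X} (hU : U ∈ 𝒜) (hU' : U' ∈ 𝒜)
    (hUU' : U ≠ U') {x y : X} (hx : x ∈ absorbed ℬ g U) (hy : y ∈ absorbed ℬ g U') :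
    g ≤ dist x y := by
  have hsep := h𝒜 hU hU' hUU'
  have hsep' := h𝒜 hU' hU hUU'.symm
  rcases mem_absorbed.1 hx with hxU | ⟨V, hV, hVU, hxV⟩ <;>
    rcases mem_absorbed.1 hy with hyU' | ⟨V', hV', hV'U', hyV'⟩
  · linarith [hsep x hxU y hyU']
  · exact le_dist_of_isNear hℬd hsep hV' hV'U' hxU hyV'
  · exact dist_comm x y ▸ le_dist_of_isNear hℬd hsep' hV hVU hyU' hxV
  · obtain rfl | hVV' := eq_or_ne V V'
    · obtain ⟨v, hv, u, hu, hvu⟩ := hVU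
      linarith [dist_comm u v, le_dist_of_isNear hℬd hsep hV hV'U' hu hv]
    · exact hℬ hV hV' hVV' x hxV y hyV'

theorem le_dist_of_mem_absorbed_of_not_isNear (hℬ : Separated ℬ g) {U V' : Set X}
    (hU : U ∈ 𝒜) (hV' : V' ∈ ℬ) (hfar : ∀ U ∈ 𝒜, ¬IsNear g V' U) {x y : X}
    (hx : x ∈ absorbed ℬ g U) (hy : y ∈ V') : g ≤ dist x y := by
  rcases mem_absorbed.1 hx with hxU | ⟨V, hV, hVU, hxV⟩
  · have := hfar U hU
    simp only [IsNear, not_exists, not_and, not_lt] at this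
    exact dist_comm x y ▸ this y hy x hxU
  · have hVV' : V ≠ V' := by rintro rfl; exact hfar U hU hVU
    exact hℬ hV hV' hVV' x hxV y hy

theorem separated_absorb (h𝒜 : Separated 𝒜 (2 * g + β)) (hℬd : DiamLe ℬ β)
    (hℬ : Separated ℬ g) (hβ : 0 ≤ β) (hg : 0 ≤ g) : Separated (absorb 𝒜 ℬ g) g := by
  rintro _ (⟨U, hU, rfl⟩ | ⟨hV, hfar⟩) _ (⟨U', hU', rfl⟩ | ⟨hV', hfar'⟩) hne x hx y hy
  · exact le_dist_of_mem_absorbed h𝒜 hℬd hℬ hβ hg hU hU' (fun h => hne (h ▸ rfl)) hx hy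
  · exact le_dist_of_mem_absorbed_of_not_isNear hℬ hU hV' hfar' hx hy
  · exact dist_comm x y ▸ le_dist_of_mem_absorbed_of_not_isNear hℬ hU' hV hfar hy hx
  · exact hℬ hV hV' hne x hx y hy

theorem IsNagataCover.absorb {ι : Type*} {𝒜 ℬ : ι → Set (Set X)} {A B : Set X}
    (h𝒜 : IsNagataCover 𝒜 A α (2 * g + β)) (hℬ : IsNagataCover ℬ B β g) (hα : 0 ≤ α)
    (hβ : 0 ≤ β) (hg : 0 ≤ g) :
    IsNagataCover (fun k => absorb (𝒜 k) (ℬ k) g) (A ∪ B) (α + 2 * g + 2 * β) g where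
  iUnion_sUnion := by
    simp only [sUnion_absorb, iUnion_union_distrib, h𝒜.iUnion_sUnion, hℬ.iUnion_sUnion]
  diamLe k := diamLe_absorb (h𝒜.diamLe k) (hℬ.diamLe k) hα hβ hg
  separated k := separated_absorb (h𝒜.separated k) (hℬ.diamLe k) (hℬ.separated k) hβ hg

end Absorb

section Construction

variable {X : Type*} [MetricSpace X]

theorem exists_isNagataCover_biUnion {ι : Type*} {N : ℕ} {B : ℕ → Set X} {β g : ℕ → ℝ}
    (h𝒟 : ∀ m ≤ N, ∃ 𝒟 : ι → Set (Set X), IsNagataCover 𝒟 (B m) (β m) (g m))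
    (hβ : ∀ m, 0 ≤ β m) (hg : ∀ m, 0 ≤ g m)
    (hstep : ∀ m < N, 2 * g (m + 1) + β (m + 1) ≤ g m) :
    ∃ 𝒞 : ι → Set (Set X),
      IsNagataCover 𝒞 (⋃ m ≤ N, B m) (2 * ∑ m ∈ Finset.range (N + 1), (β m + g m)) (g N) := by
  suffices ∀ M ≤ N, ∃ 𝒞 : ι → Set (Set X),
      IsNagataCover 𝒞 (⋃ m ≤ M, B m) (2 * ∑ m ∈ Finset.range (M + 1), (β m + g m)) (g M) from
    this N le_rfl
  intro M
  induction M with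
  | zero =>
    intro h0
    obtain ⟨𝒟, h⟩ := h𝒟 0 h0
    refine ⟨𝒟, ?_⟩
    simp only [nonpos_iff_eq_zero, iUnion_iUnion_eq_left, zero_add, Finset.sum_range_one]
    exact h.mono (by linarith [hβ 0, hg 0]) le_rfl
  | succ M ih =>
    intro hM
    obtain ⟨𝒞, h𝒞⟩ := ih (by omega)
    obtain ⟨𝒟, h𝒟⟩ := h𝒟 (M + 1) hM
    have hsum : 0 ≤ ∑ m ∈ Finset.range (M + 1), (β m + g m) :=
      Finset.sum_nonneg fun m _ => add_nonneg (hβ m) (hg m)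
    refine ⟨fun k => absorb (𝒞 k) (𝒟 k) (g (M + 1)), ?_⟩
    rw [Set.biUnion_le_succ, Finset.sum_range_succ]
    exact ((h𝒞.mono le_rfl (hstep M hM)).absorb h𝒟 (by positivity) (hβ _) (hg _)).mono
      (by linarith) le_rfl

theorem exists_isNagataCover_sUnion {ι : Type*} {𝒢 : Set (Set X)} {τ ρ ρ' : ℝ}
    (h𝒢 : Separated 𝒢 ρ)
    (hloc : ∀ U ∈ 𝒢, U.Nonempty → ∃ A, U ⊆ A ∧ ∃ 𝒱 : ι → Set (Set X), IsNagataCover 𝒱 A τ ρ') :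
    ∃ 𝒟 : ι → Set (Set X), IsNagataCover 𝒟 (⋃₀ 𝒢) τ (min ρ' ρ) := by
  choose! A hUA 𝒱 h𝒱 using hloc
  have mem : ∀ {k W}, W ∈ (⋃ U ∈ 𝒢, (· ∩ U) '' 𝒱 U k) ↔ ∃ U ∈ 𝒢, ∃ V ∈ 𝒱 U k, V ∩ U = W := by
    intro k W
    simp only [mem_iUnion, mem_image, exists_prop]
  refine ⟨fun k => ⋃ U ∈ 𝒢, (· ∩ U) '' 𝒱 U k, ⟨?_, ?_, ?_⟩⟩
  · refine Subset.antisymm (iUnion_subset fun k => sUnion_subset fun W hW => ?_) ?_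
    · obtain ⟨U, hU, V, -, rfl⟩ := mem.1 hW
      exact inter_subset_right.trans (subset_sUnion_of_mem hU)
    · rintro x ⟨U, hU, hxU⟩
      have hx : x ∈ ⋃ k, ⋃₀ 𝒱 U k := (h𝒱 U hU ⟨x, hxU⟩).iUnion_sUnion ▸ hUA U hU ⟨x, hxU⟩ hxU
      obtain ⟨k, V, hV, hxV⟩ := mem_iUnion.1 hx
      exact mem_iUnion.2 ⟨k, V ∩ U, mem.2 ⟨U, hU, V, hV, rfl⟩, hxV, hxU⟩
  · intro k W hW x hx y hy
    obtain ⟨U, hU, V, hV, rfl⟩ := mem.1 hW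
    exact (h𝒱 U hU ⟨x, hx.2⟩).diamLe k V hV x hx.1 y hy.1
  · intro k W hW W' hW' hne x hx y hy
    obtain ⟨U, hU, V, hV, rfl⟩ := mem.1 hW
    obtain ⟨U', hU', V', hV', rfl⟩ := mem.1 hW'
    obtain rfl | hUU' := eq_or_ne U U'
    · have hVV' : V ≠ V' := by rintro rfl; exact hne rfl
      exact (min_le_left _ _).trans
        ((h𝒱 U hU ⟨x, hx.2⟩).separated k hV hV' hVV' x hx.1 y hy.1)
    · exact (min_le_right _ _).trans (h𝒢 hU hU' hUU' x hx.2 y hy.2)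

end Construction

section LinearlyControlled

variable {X : Type*} [MetricSpace X]

theorem exists_isNagataCover_sUnion_of_ball {ι : Type*} {K : Set X} {𝒢 : Set (Set X)}
    {σ ρ τ ρ' r : ℝ} (hK : ⋃₀ 𝒢 ⊆ K) (h𝒢d : DiamLe 𝒢 σ) (h𝒢 : Separated 𝒢 ρ) (hσ : σ < r)
    (hball : ∀ x ∈ K, ∃ 𝒱 : ι → Set (Set X), IsNagataCover 𝒱 (ball x r) τ ρ') :
    ∃ 𝒟 : ι → Set (Set X), IsNagataCover 𝒟 (⋃₀ 𝒢) τ (min ρ' ρ) :=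
  exists_isNagataCover_sUnion h𝒢 fun U hU ⟨x, hx⟩ =>
    ⟨ball x r, fun y hy => mem_ball.2 ((h𝒢d U hU y hy x hx).trans_lt hσ),
      hball x (hK (subset_sUnion_of_mem hU hx))⟩

theorem exists_isNagataCover_of_isNagataCover_ball {K : Set X} {N n : ℕ}
    {𝒰 : Fin (N + 1) → Set (Set X)} {cbar κ lam q r₀ R : ℝ} (hlam : 0 < lam) (hκ : 0 ≤ κ)
    (hq0 : 0 < q) (hqlam : (2 * lam + κ) * q = lam) (hsmall : 4 * lam ≤ cbar * q ^ N)
    (hr₀ : 0 < r₀) (hr₀R : r₀ < R)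
    (h𝒰 : IsNagataCover 𝒰 K (q ^ N * r₀ / 4) (cbar * (q ^ N * r₀ / 4)))
    (hball : ∀ x ∈ K, ∀ r, 0 < r → r < R →
      ∃ 𝒱 : Fin (n + 1) → Set (Set X), IsNagataCover 𝒱 (ball x (r / 2)) (κ * r) (lam * r)) :
    ∃ 𝒞 : Fin (n + 1) → Set (Set X),
      IsNagataCover 𝒞 K (4 * (κ + lam) * r₀) (lam * (q ^ N * r₀)) := by
  have hq : q ≤ 1 / 2 := by nlinarith
  have hlevel : ∀ m ≤ N, ∃ 𝒟 : Fin (n + 1) → Set (Set X),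
      IsNagataCover 𝒟 (⋃₀ 𝒰 (Fin.ofNat (N + 1) m)) (κ * (q ^ m * r₀)) (lam * (q ^ m * r₀)) := by
    intro m hm
    have hqNm : q ^ N * r₀ ≤ q ^ m * r₀ :=
      mul_le_mul_of_nonneg_right (pow_le_pow_of_le_one hq0.le (by linarith) hm) hr₀.le
    have hqm : q ^ m * r₀ ≤ r₀ := mul_le_of_le_one_left hr₀.le (pow_le_one₀ hq0.le (by linarith))
    obtain ⟨𝒟, h𝒟⟩ := exists_isNagataCover_sUnion_of_ball
      (h𝒰.iUnion_sUnion ▸ subset_iUnion (fun k => ⋃₀ 𝒰 k) _) (h𝒰.diamLe _) (h𝒰.separated _)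
      (r := q ^ m * r₀ / 2) (by linarith [show 0 < q ^ m * r₀ by positivity])
      (fun x hx => hball x hx _ (by positivity) (by linarith))
    refine ⟨𝒟, h𝒟.mono le_rfl (le_min le_rfl ?_)⟩
    calc lam * (q ^ m * r₀) ≤ lam * r₀ := by gcongr
      _ ≤ cbar * q ^ N * r₀ / 4 := by nlinarith
      _ = cbar * (q ^ N * r₀ / 4) := by ring
  obtain ⟨𝒞, h𝒞⟩ := exists_isNagataCover_biUnion hlevel (fun m => by positivity)
    (fun m => by positivity) fun m _ =>
      le_of_eq (by rw [pow_succ]; linear_combination (q ^ m * r₀) * hqlam)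
  rw [biUnion_le_natCast_eq_iUnion (fun k => ⋃₀ 𝒰 k), h𝒰.iUnion_sUnion] at h𝒞
  refine ⟨𝒞, h𝒞.mono ?_ le_rfl⟩
  have hsum : ∑ m ∈ Finset.range (N + 1), (κ * (q ^ m * r₀) + lam * (q ^ m * r₀)) =
      (κ + lam) * r₀ * ∑ m ∈ Finset.range (N + 1), q ^ m := by
    rw [Finset.mul_sum]
    exact Finset.sum_congr rfl fun m _ => by ring
  calc 2 * ∑ m ∈ Finset.range (N + 1), (κ * (q ^ m * r₀) + lam * (q ^ m * r₀))
      ≤ 2 * ((κ + lam) * r₀ * 2) := by rw [hsum]; gcongr; exact geom_sum_le_two hq0.le hq _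
    _ = 4 * (κ + lam) * r₀ := by ring

theorem exists_dimNle_of_isNagataCover_ball {K : Set X} {N n : ℕ} {cbar κ lam S R : ℝ}
    (hlam : 0 < lam) (hκ : 0 ≤ κ) (hS : 0 < S) (hR : 0 < R)
    (hsmall : 4 * lam ≤ cbar * (lam / (2 * lam + κ)) ^ N)
    (hK : ∀ σ, 0 < σ → σ ≤ S → dimNle (fun p q : X => dist p q) K cbar σ N)
    (hball : ∀ x ∈ K, ∀ r, 0 < r → r < R →
      ∃ 𝒱 : Fin (n + 1) → Set (Set X), IsNagataCover 𝒱 (ball x (r / 2)) (κ * r) (lam * r)) :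
    ∃ c' t₀ : ℝ, 0 < c' ∧ 0 < t₀ ∧ ∀ t : ℝ, 0 < t → t < t₀ →
      dimNle (fun p q : X => dist p q) K c' t n := by
  -- the largest ratio of consecutive scales for which each level absorbs the next one
  set q := lam / (2 * lam + κ)
  have hq0 : 0 < q := by positivity
  have hqlam : (2 * lam + κ) * q = lam := mul_div_cancel₀ _ (by positivity)
  have hκlam : 0 < 4 * (κ + lam) := by positivity
  refine ⟨lam * q ^ N / (4 * (κ + lam)), min (4 * (κ + lam) * R) (16 * (κ + lam) * S),
    by positivity, by positivity, fun t ht htt₀ => ?_⟩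
  obtain ⟨htR, htS⟩ := lt_min_iff.1 htt₀
  set r₀ := t / (4 * (κ + lam)) with hr₀_def
  have hr₀R : r₀ < R := by rw [div_lt_iff₀ hκlam]; linarith
  have hr₀S : r₀ < 4 * S := by rw [div_lt_iff₀ hκlam]; linarith
  have hσS : q ^ N * r₀ / 4 ≤ S := by
    nlinarith [pow_le_one₀ hq0.le (show q ≤ 1 by nlinarith) (n := N), show 0 < r₀ by positivity]
  obtain ⟨𝒰, h𝒰⟩ := dimNle_iff_exists_isNagataCover.1 (hK _ (by positivity) hσS)
  obtain ⟨𝒞, h𝒞⟩ := exists_isNagataCover_of_isNagataCover_ball hlam hκ hq0 hqlam hsmall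
    (by positivity) hr₀R h𝒰 hball
  refine dimNle_iff_exists_isNagataCover.2 ⟨𝒞, h𝒞.mono (le_of_eq ?_) (le_of_eq ?_)⟩ <;>
    rw [hr₀_def] <;> field_simp

end LinearlyControlled

/-- For every choice of constants `n̄, n ∈ ℕ`, `s̄, s₀ ∈ (0,∞]`,
`a, b > 0` and `c, c̄ ∈ (0,1)` there is `ε ∈ (0,1/8)` such that: if `K ⊆ X` satisfies
`dim_N(K,c̄,s) ≤ n̄` for all `0 < s ≤ s̄`, and there is `r_ε > 0` such that
`dim_N(B_X(x,r/2), (cas − bε)/(as + bε), r(as + bε)) ≤ n` for all `x ∈ K`,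
`r ∈ (0,r_ε)` and `s ∈ (0,s₀)`, then `K` has linearly controlled dimension at most `n`. -/
theorem lc_dim_final_conclusion (nbar n : ℕ) (sbar s₀ : ℝ≥0∞) (a b c cbar : ℝ)
    (hsbar : 0 < sbar) (hs₀ : 0 < s₀) (ha : 0 < a) (hb : 0 < b)
    (hc : c ∈ Set.Ioo (0:ℝ) 1) (hcbar : cbar ∈ Set.Ioo (0:ℝ) 1) :
    ∃ ε : ℝ, ε ∈ Set.Ioo (0:ℝ) (1/8) ∧
      ∀ (X : Type u) [MetricSpace X] (K : Set X),
        (∀ s : ℝ, 0 < s → ENNReal.ofReal s ≤ sbar →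
          dimNle (fun p q : X => dist p q) K cbar s nbar) →
        (∃ rε : ℝ, 0 < rε ∧ ∀ x ∈ K, ∀ r : ℝ, 0 < r → r < rε →
          ∀ s : ℝ, 0 < s → ENNReal.ofReal s < s₀ →
            dimNle (fun p q : X => dist p q) (Metric.ball x (r / 2))
              ((c * a * s - b * ε) / (a * s + b * ε)) (r * (a * s + b * ε)) n) →
        ∃ c' t₀ : ℝ, 0 < c' ∧ 0 < t₀ ∧ ∀ t : ℝ, 0 < t → t < t₀ →
          dimNle (fun p q : X => dist p q) K c' t n := by
  have hc0 := hc.1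
  have hcbar0 := hcbar.1
  -- with `b ε = c a s / 2`, the ratio `q` of the ball covers no longer depends on `s`
  set q := c / (3 * c + 2)
  obtain ⟨s, hs, hsM, hss₀⟩ := ENNReal.exists_pos_lt_ofReal_lt hs₀
    (M := min (b / (4 * c * a)) (cbar * q ^ nbar / (2 * c * a))) (by positivity)
  have hsb : s < b / (4 * c * a) := hsM.trans_le (min_le_left _ _)
  have hscbar : s < cbar * q ^ nbar / (2 * c * a) := hsM.trans_le (min_le_right _ _)
  rw [lt_div_iff₀ (by positivity)] at hsb hscbar
  set ε := c * a * s / (2 * b) with hε_def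
  have hε : 0 < ε := div_pos (by positivity) (by positivity)
  have hbε : b * ε = c * a * s / 2 := by rw [hε_def]; field_simp
  have hκ : 0 < a * s + b * ε := by positivity
  have hlam : c * a * s - b * ε = c * a * s / 2 := by rw [hbε]; ring
  refine ⟨ε, ⟨hε, by rw [hε_def, div_lt_iff₀ (by positivity)]; linarith⟩,
    fun X _ K hK ⟨R, hR, hball⟩ => ?_⟩
  obtain ⟨S, hS, -, hSsbar⟩ := ENNReal.exists_pos_lt_ofReal_lt hsbar one_pos
  have hratio : (c * a * s - b * ε) / (2 * (c * a * s - b * ε) + (a * s + b * ε)) = q := by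
    rw [hlam, hbε, div_eq_div_iff (by positivity) (by positivity)]
    ring
  refine exists_dimNle_of_isNagataCover_ball (κ := a * s + b * ε) (lam := c * a * s - b * ε)
    (by rw [hlam]; positivity) hκ.le hS hR (by rw [hratio, hlam]; linarith)
    (fun σ hσ hσS => hK σ hσ ((ENNReal.ofReal_le_ofReal hσS).trans hSsbar.le))
    fun x hx r hr hrR => ?_
  obtain ⟨𝒱, h𝒱⟩ := dimNle_iff_exists_isNagataCover.1 (hball x hx r hr hrR s hs hss₀)
  exact ⟨𝒱, h𝒱.mono (by rw [mul_comm]) (le_of_eq (by field_simp [hκ.ne']))⟩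
end

section
/- Let (X,d) be a metric space, let λ₁ > λ₂ > 0 and x ∈ X. Then for every ε > √(λ₁/λ₂ − 1) there exists an ε-coupling between the pointed metric spaces (X, λ₁d, x) and (X, λ₂d, x). In other words, the pointed Gromov–Hausdorff distance between (X, λ₁d, x) and (X, λ₂d, x) is at most √(λ₁/λ₂ − 1). -/
open Metric Set

/-- For `λ₁ > λ₂ > 0` and `x ∈ X`, for every `ε > √(λ₁/λ₂ − 1)` there is
an `ε`-coupling between `(X, λ₁d, x)` and `(X, λ₂d, x)`; i.e. the pointed
Gromov–Hausdorff distance of the two dilated spaces is at most `√(λ₁/λ₂ − 1)`. -/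
theorem gh_dist_of_dilations {X : Type*} [MetricSpace X] (x : X) (l₁ l₂ : ℝ)
    (h₂ : 0 < l₂) (h₁₂ : l₂ < l₁) :
    ∀ ε : ℝ, Real.sqrt (l₁ / l₂ - 1) < ε →
      ∃ d : X ⊕ X → X ⊕ X → ℝ,
        IsCoupling (fun a b : X => l₁ * dist a b) (fun a b : X => l₂ * dist a b)
          x x ε d := by
  intro ε hε
  have hε0 : 0 < ε := lt_of_le_of_lt (Real.sqrt_nonneg _) hε
  have hs : (0:ℝ) ≤ l₁ / l₂ - 1 := by
    have : (1:ℝ) ≤ l₁ / l₂ := (one_le_div h₂).2 h₁₂.le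
    linarith
  have hεsq : l₁ / l₂ - 1 < ε ^ 2 := by
    nlinarith [Real.sq_sqrt hs, Real.sqrt_nonneg (l₁ / l₂ - 1)]
  set δ : ℝ := ε - (l₁ / l₂ - 1) / ε with hδdef
  have hδpos : 0 < δ := by
    rw [hδdef, sub_pos, div_lt_iff₀ hε0]
    nlinarith
  have hδle : δ ≤ ε := by
    rw [hδdef]
    have : 0 ≤ (l₁ / l₂ - 1) / ε := div_nonneg hs hε0.le
    linarith
  have hl12 : 0 < l₁ - l₂ := sub_pos.2 h₁₂
  have hq : l₁ / l₂ - 1 = (l₁ - l₂) / l₂ := by field_simp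
  refine ⟨fun p q => match p, q with
    | Sum.inl a, Sum.inl b => l₁ * dist a b
    | Sum.inr a, Sum.inr b => l₂ * dist a b
    | Sum.inl a, Sum.inr b => δ + (l₁ - l₂) * dist a x + l₂ * dist a b
    | Sum.inr a, Sum.inl b => δ + (l₁ - l₂) * dist b x + l₂ * dist b a,
    ?_, ?_, ?_, ?_, ?_, ?_, ?_, ?_⟩
  · rintro (a | a) (b | b) <;> simp [dist_comm]
  · rintro (a | a) <;> simp
  · rintro (a | a) (b | b) (c | c) <;> dsimp only
    · linarith [mul_le_mul_of_nonneg_left (dist_triangle a b c) (h₂.trans h₁₂).le]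
    · linarith [mul_le_mul_of_nonneg_left (dist_triangle a b x) hl12.le,
        mul_le_mul_of_nonneg_left (dist_triangle a b c) h₂.le]
    · linarith [mul_le_mul_of_nonneg_left (dist_triangle_right a c x) hl12.le,
        mul_le_mul_of_nonneg_left (dist_triangle_right a c b) h₂.le, hδpos.le]
    · linarith [mul_le_mul_of_nonneg_left (dist_triangle a b c) h₂.le]
    · linarith [mul_le_mul_of_nonneg_left (dist_triangle_left c x b) hl12.le,
        mul_le_mul_of_nonneg_left (dist_triangle_left c a b) h₂.le]
    · linarith [mul_le_mul_of_nonneg_left (dist_triangle_left a c b) h₂.le, hδpos.le,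
        mul_nonneg hl12.le (dist_nonneg (x := b) (y := x))]
    · have t : dist c a ≤ dist a b + dist c b := by
        rw [dist_comm c a]; exact dist_triangle_right a c b
      linarith [mul_le_mul_of_nonneg_left t h₂.le]
    · linarith [mul_le_mul_of_nonneg_left (dist_triangle a b c) h₂.le]
  · intro u v; rfl
  · intro u v; rfl
  · simp only [dist_self, mul_zero, add_zero]
    linarith
  · intro u hu
    refine ⟨u, ?_⟩
    simp only [dist_self, mul_zero, add_zero]
    have hu' : l₁ * dist u x * ε < 1 := (lt_div_iff₀ hε0).1 hu
    have key : (l₁ - l₂) * dist u x < (l₁ / l₂ - 1) / ε := by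
      rw [lt_div_iff₀ hε0, hq, lt_div_iff₀ h₂]
      have hDε : 0 ≤ dist u x * ε := mul_nonneg dist_nonneg hε0.le
      have h1 : l₂ * (dist u x * ε) ≤ l₁ * (dist u x * ε) :=
        mul_le_mul_of_nonneg_right h₁₂.le hDε
      have h2 : l₂ * (dist u x * ε) < 1 := by linarith
      linarith [mul_lt_mul_of_pos_left h2 hl12]
    rw [hδdef]; linarith
  · intro v hv
    refine ⟨v, ?_⟩
    simp only [dist_self, mul_zero, add_zero]
    have hv' : l₂ * dist v x * ε < 1 := (lt_div_iff₀ hε0).1 hv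
    have key : (l₁ - l₂) * dist v x < (l₁ / l₂ - 1) / ε := by
      rw [lt_div_iff₀ hε0, hq, lt_div_iff₀ h₂]
      have h2 : l₂ * (dist v x * ε) < 1 := by linarith
      linarith [mul_lt_mul_of_pos_left h2 hl12]
    rw [hδdef]; linarith
end

section
/- Let X be a metric space, C > 1 and α ≥ 0. Assume that for every ε > 0 there exists λ_ε > 0 such that for every x ∈ X and every λ > λ_ε there exist a pointed metric space (Y,y) and an ε-coupling between (X, λd, x) and (Y,y), where (Y,y) has the property that for every δ ∈ (0,1) the ball B_Y(y,2) can be covered by at most C(2/δ)^α balls of radius δ/2 with centers in Y. Then there exists a constant R' > 0 such that for every β > α there exists C' > 1 with dim_A(B(x,R'),C',R') ≤ β for every x ∈ X, where B(x,R') is regarded as a metric subspace of X. -/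
open Metric Set

universe u

/-!
Through an `ε`-coupling of `(X, d/ρ, x)` with a tangent `(Y, y)`, a cover of `B_Y(y, 2)` by
`C (3/θ)^α` balls of radius `θ/3` pulls back to a cover of any subset of `B(x, ρ)` by as many
balls of radius `θ ρ`, for all `ρ` below a threshold depending on `θ`. For `β > α` choose `θ`
with `C (3/θ)^α ≤ θ^(-β)`. A fixed number of halving steps (valid below a threshold independent
of `β`) brings the radius below the threshold for `θ`; then `n` steps of factor `θ` with
`θ^(n+1) R < r ≤ θ^n R` cost at most `(θ^(-β))^n ≤ (R/r)^β`.
-/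

open Filter

section Covering

variable {X : Type*} [PseudoMetricSpace X]

def CoverableBy (S : Set X) (r N : ℝ) : Prop :=
  ∃ T : Finset X, ↑T ⊆ S ∧ (T.card : ℝ) ≤ N ∧ ∀ w ∈ S, ∃ t ∈ T, dist w t < r

lemma CoverableBy.mono {S : Set X} {r r' N N' : ℝ} (h : CoverableBy S r N) (hr : r ≤ r')
    (hN : N ≤ N') : CoverableBy S r' N' := by
  obtain ⟨T, hTS, hcard, hcov⟩ := h
  exact ⟨T, hTS, hcard.trans hN, fun w hw =>
    (hcov w hw).imp fun _ ⟨ht, hwt⟩ => ⟨ht, hwt.trans_le hr⟩⟩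

lemma coverableBy_two_mul_of_finset {S : Set X} {r : ℝ} (U : Finset X)
    (hU : ∀ w ∈ S, ∃ u ∈ U, dist w u < r) : CoverableBy S (2 * r) U.card := by
  classical
  have hnear : ∀ u : X, ∃ s : X, (∃ s' ∈ S, dist s' u < r) → s ∈ S ∧ dist s u < r := fun u => by
    by_cases hu : ∃ s' ∈ S, dist s' u < r
    · obtain ⟨s, hs⟩ := hu
      exact ⟨s, fun _ => hs⟩
    · exact ⟨u, fun h => absurd h hu⟩
  choose g hg using hnear
  let U' := U.filter fun u => ∃ s' ∈ S, dist s' u < r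
  refine ⟨U'.image g, ?_, ?_, ?_⟩
  · intro s hs
    obtain ⟨u, hu, rfl⟩ := Finset.mem_image.1 hs
    exact (hg u (Finset.mem_filter.1 hu).2).1
  · exact_mod_cast Finset.card_image_le.trans (Finset.card_filter_le _ _)
  · intro w hw
    obtain ⟨u, hu, hwu⟩ := hU w hw
    have hgu := hg u ⟨w, hw, hwu⟩
    refine ⟨g u, Finset.mem_image_of_mem g (Finset.mem_filter.2 ⟨hu, w, hw, hwu⟩), ?_⟩
    linarith [dist_triangle_right w (g u) u]

lemma coverableBy_mul_of_coverableBy_inter_ball {S : Set X} {ρ r N M : ℝ}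
    (hS : CoverableBy S ρ N) (hM : 0 ≤ M) (hpieces : ∀ t ∈ S, CoverableBy (S ∩ ball t ρ) r M) :
    CoverableBy S r (N * M) := by
  classical
  obtain ⟨T, hTS, hcard, hcov⟩ := hS
  choose! F hFS hFcard hFcov using fun t (ht : t ∈ T) => hpieces t (hTS ht)
  refine ⟨T.biUnion F, ?_, ?_, ?_⟩
  · simp only [Finset.coe_biUnion, iUnion_subset_iff]
    exact fun t ht => (hFS t ht).trans inter_subset_left
  · calc ((T.biUnion F).card : ℝ) ≤ ∑ t ∈ T, ((F t).card : ℝ) := by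
          exact_mod_cast Finset.card_biUnion_le
      _ ≤ ∑ _t ∈ T, M := Finset.sum_le_sum hFcard
      _ = T.card * M := by rw [Finset.sum_const, nsmul_eq_mul]
      _ ≤ N * M := mul_le_mul_of_nonneg_right hcard hM
  · intro w hw
    obtain ⟨t, ht, hwt⟩ := hcov w hw
    obtain ⟨s, hs, hws⟩ := hFcov t ht w ⟨hw, hwt⟩
    exact ⟨s, Finset.mem_biUnion.2 ⟨t, ht, hs⟩, hws⟩

variable (X) in
def ShrinksBalls (M θ P : ℝ) : Prop :=
  ∀ ρ, 0 < ρ → ρ < P → ∀ z : X, ∀ S ⊆ ball z ρ, CoverableBy S (θ * ρ) M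

lemma ShrinksBalls.comp {M θ P M' θ' P' : ℝ} (h : ShrinksBalls X M θ P)
    (h' : ShrinksBalls X M' θ' P') (hθ : 0 < θ) (hP : θ * P ≤ P') (hM' : 0 ≤ M') :
    ShrinksBalls X (M * M') (θ * θ') P := by
  intro ρ hρ hρP z S hS
  refine coverableBy_mul_of_coverableBy_inter_ball (h ρ hρ hρP z S hS) hM' fun t _ => ?_
  have hθρ : θ * ρ < P' := (mul_lt_mul_of_pos_left hρP hθ).trans_le hP
  have := h' (θ * ρ) (mul_pos hθ hρ) hθρ t (S ∩ ball t (θ * ρ)) inter_subset_right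
  rwa [mul_left_comm, ← mul_assoc] at this

lemma ShrinksBalls.pow_succ {M θ P : ℝ} (h : ShrinksBalls X M θ P) (hθ0 : 0 < θ) (hθ1 : θ ≤ 1)
    (hP : 0 ≤ P) (hM : 0 ≤ M) (n : ℕ) : ShrinksBalls X (M ^ (n + 1)) (θ ^ (n + 1)) P := by
  induction n with
  | zero => simpa using h
  | succ n ih =>
    rw [_root_.pow_succ M, _root_.pow_succ θ]
    exact ih.comp h (pow_pos hθ0 _) (mul_le_of_le_one_left hP (pow_le_one₀ hθ0.le hθ1)) hM

lemma ShrinksBalls.coverableBy_rpow {N η P₀ M θ P β : ℝ} (hcoarse : ShrinksBalls X N η P₀)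
    (hfine : ShrinksBalls X M θ P) (hη0 : 0 < η) (hη1 : η ≤ 1) (hηP : η * P₀ ≤ P)
    (hθ0 : 0 < θ) (hθ1 : θ < 1) (hN : 0 ≤ N) (hM : 0 ≤ M) (hβ : 0 ≤ β) (hMθ : M ≤ θ⁻¹ ^ β)
    {r R : ℝ} (hr : 0 < r) (hrR : r < R) (hR : R < P₀) {z : X} {S : Set X}
    (hS : S ⊆ ball z R) : CoverableBy S r (N * M * (R / r) ^ β) := by
  have hR0 : 0 < R := hr.trans hrR
  have hP : 0 ≤ P := (mul_pos hη0 (hR0.trans hR)).le.trans hηP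
  obtain ⟨n, hn_le, hn_lt⟩ :=
    exists_nat_pow_near ((one_le_div hr).2 hrR.le) (one_lt_inv_iff₀.2 ⟨hθ0, hθ1⟩)
  have hcomp := hcoarse.comp (hfine.pow_succ hθ0 hθ1.le hP hM n) hη0 hηP (pow_nonneg hM _)
  refine (hcomp R hR0 hR z S hS).mono ?_ ?_
  · have hθR : θ ^ (n + 1) * R < r := by
      rwa [div_lt_iff₀ hr, inv_pow, ← div_eq_inv_mul, lt_div_iff₀' (pow_pos hθ0 _)] at hn_lt
    calc η * θ ^ (n + 1) * R ≤ θ ^ (n + 1) * R := by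
          rw [mul_assoc]; exact mul_le_of_le_one_left (by positivity) hη1
      _ ≤ r := hθR.le
  · have hMn : M ^ n ≤ (R / r) ^ β :=
      calc M ^ n ≤ (θ⁻¹ ^ β) ^ n := pow_le_pow_left₀ hM hMθ n
        _ = (θ⁻¹ ^ n) ^ β := Real.rpow_pow_comm (by positivity) β n
        _ ≤ (R / r) ^ β := Real.rpow_le_rpow (by positivity) hn_le hβ
    calc N * M ^ (n + 1) = N * M * M ^ n := by ring
      _ ≤ N * M * (R / r) ^ β := mul_le_mul_of_nonneg_left hMn (by positivity)

lemma dimAle_of_coverableBy {A : Set X} {K Rbar β : ℝ}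
    (h : ∀ r R, 0 < r → r < R → R < Rbar → ∀ z ∈ A, CoverableBy (A ∩ ball z R) r (K * (R / r) ^ β)) :
    dimAle (fun a b : X => dist a b) A K Rbar β := by
  intro r R hr hrR hR z hz
  obtain ⟨T, hTS, hcard, hcov⟩ := h r R hr hrR hR z hz
  exact ⟨T, hTS.trans inter_subset_left, hcard, fun w hw hwz => hcov w ⟨hw, hwz⟩⟩

end Covering

lemma IsCoupling.exists_finset_cover_of_finset_cover {A B : Type*} {dA : A → A → ℝ}
    {dB : B → B → ℝ} {a₀ : A} {b₀ : B} {ε s : ℝ} {d : A ⊕ B → A ⊕ B → ℝ}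
    (hd : IsCoupling dA dB a₀ b₀ ε d) (hε0 : 0 < ε) (hε : ε ≤ 1 / 4) (hs : s ≤ 1 / 2)
    (T : Finset B) (hT : ∀ v, dB v b₀ < 2 → ∃ t ∈ T, dB v t < s) :
    ∃ U : Finset A, U.card ≤ T.card ∧ ∀ u, dA u a₀ < 1 → ∃ u' ∈ U, dA u u' < 2 * ε + s := by
  classical
  obtain ⟨dsymm, -, dtri, dAA, dBB, hbase, hAB, hBA⟩ := hd
  have hpartner : ∀ t : B, ∃ u : A, dB t b₀ < 1 / ε → d (.inl u) (.inr t) < ε := by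
    intro t
    by_cases ht : dB t b₀ < 1 / ε
    · exact (hBA t ht).imp fun _ h _ => h
    · exact ⟨a₀, fun h => absurd h ht⟩
  choose f hf using hpartner
  have hε4 : 4 ≤ 1 / ε := by rw [le_div_iff₀ hε0]; linarith
  refine ⟨T.image f, Finset.card_image_le, fun u hu => ?_⟩
  obtain ⟨v, hv⟩ := hAB u (by linarith)
  have hvb : dB v b₀ < 2 := by
    rw [← dBB]
    linarith [dtri (.inr v) (.inl u) (.inr b₀), dtri (.inl u) (.inl a₀) (.inr b₀),
      dsymm (.inr v) (.inl u), dAA u a₀]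
  obtain ⟨t, ht, hvt⟩ := hT v hvb
  have htb : dB t b₀ < 1 / ε := by
    rw [← dBB]
    linarith [dtri (.inr t) (.inr v) (.inr b₀), dsymm (.inr t) (.inr v), dBB v t, dBB v b₀]
  refine ⟨f t, Finset.mem_image_of_mem f ht, ?_⟩
  rw [← dAA]
  linarith [dtri (.inl u) (.inr v) (.inl (f t)), dtri (.inr v) (.inr t) (.inl (f t)),
    dsymm (.inr t) (.inl (f t)), hf t htb, dBB v t]

def HasUniformlyCoverableTangents (X : Type*) [PseudoMetricSpace X] (C α : ℝ) : Prop :=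
  ∀ ε : ℝ, 0 < ε → ∃ lε : ℝ, 0 < lε ∧ ∀ x : X, ∀ lam : ℝ, lε < lam →
    ∃ (Y : Type u) (dY : Y → Y → ℝ) (y : Y) (d : X ⊕ Y → X ⊕ Y → ℝ),
      IsMetricDist dY ∧
      (∀ δ : ℝ, δ ∈ Set.Ioo (0:ℝ) 1 → ∃ T : Finset Y,
        (T.card : ℝ) ≤ C * (2 / δ) ^ α ∧
        ∀ z : Y, dY z y < 2 → ∃ t ∈ T, dY z t < δ / 2) ∧
      IsCoupling (fun a b : X => lam * dist a b) dY x y ε d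

/-- With `ε = θ/12` and `δ = 2θ/3`, a cover of the tangent ball pulls back to a cover of a
`ρ`-ball by balls of radius `(2ε + δ/2) ρ = θ ρ / 2`; recentering doubles this to `θ ρ`. -/
lemma HasUniformlyCoverableTangents.shrinksBalls {X : Type*} [PseudoMetricSpace X] {C α θ : ℝ}
    (h : HasUniformlyCoverableTangents.{u} X C α) (hθ0 : 0 < θ) (hθ1 : θ ≤ 1) :
    ∃ P > 0, ShrinksBalls X (C * (3 / θ) ^ α) θ P := by
  obtain ⟨l, hl0, hl⟩ := h (θ / 12) (by positivity)
  refine ⟨1 / l, by positivity, fun ρ hρ hρP z S hS => ?_⟩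
  have hlρ : l < 1 / ρ := by rwa [lt_div_iff₀ hρ, ← lt_div_iff₀' hl0]
  obtain ⟨Y, dY, y, d, -, hcover, hd⟩ := hl z (1 / ρ) hlρ
  obtain ⟨T, hTcard, hT⟩ := hcover (2 * θ / 3) ⟨by positivity, by linarith⟩
  obtain ⟨U, hUT, hU⟩ := hd.exists_finset_cover_of_finset_cover (s := θ / 3) (by positivity)
    (by linarith) (by linarith) T
    fun v hv => (hT v hv).imp fun _ ⟨ht, hvt⟩ => ⟨ht, by linarith⟩
  have hUS : ∀ w ∈ S, ∃ u ∈ U, dist w u < θ / 2 * ρ := by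
    intro w hw
    have hwz : 1 / ρ * dist w z < 1 := by
      rw [one_div_mul_eq_div, div_lt_one hρ]; exact mem_ball.1 (hS hw)
    obtain ⟨u, hu, hwu⟩ := hU w hwz
    refine ⟨u, hu, ?_⟩
    rw [one_div_mul_eq_div, div_lt_iff₀ hρ] at hwu
    linarith
  refine (coverableBy_two_mul_of_finset U hUS).mono (by linarith) ?_
  calc (U.card : ℝ) ≤ T.card := by exact_mod_cast hUT
    _ ≤ C * (2 / (2 * θ / 3)) ^ α := hTcard
    _ = C * (3 / θ) ^ α := by congr 2; field_simp

lemma exists_mul_div_rpow_le_inv_rpow (C : ℝ) {c α β : ℝ} (hc : 0 ≤ c) (hαβ : α < β) :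
    ∃ θ, 0 < θ ∧ θ < 1 ∧ C * (c / θ) ^ α ≤ θ⁻¹ ^ β := by
  obtain ⟨x, hCx, hx⟩ := ((tendsto_rpow_atTop (sub_pos.2 hαβ)).eventually_ge_atTop
    (C * c ^ α)).and (eventually_gt_atTop 1) |>.exists
  have hx0 : 0 < x := one_pos.trans hx
  refine ⟨x⁻¹, inv_pos.2 hx0, inv_lt_one_of_one_lt₀ hx, ?_⟩
  calc C * (c / x⁻¹) ^ α = C * c ^ α * x ^ α := by
        rw [div_inv_eq_mul, Real.mul_rpow hc hx0.le, mul_assoc]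
    _ ≤ x ^ (β - α) * x ^ α := mul_le_mul_of_nonneg_right hCx (by positivity)
    _ = x⁻¹⁻¹ ^ β := by rw [inv_inv, ← Real.rpow_add hx0, sub_add_cancel]

/-- If `X` has uniformly close tangents whose unit balls around the base
point can be uniformly covered (at most `C(2/δ)^α` balls of radius `δ/2` cover
`B_Y(y,2)`), then there is `R' > 0` such that for every `β > α` there is `C' > 1` with
`dim_A(B(x,R'),C',R') ≤ β` for every `x ∈ X`. -/
theorem assouad_from_uniform_tangents {X : Type*} [MetricSpace X] (C α : ℝ)
    (hC : 1 < C) (hα : 0 ≤ α)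
    (h : ∀ ε : ℝ, 0 < ε → ∃ lε : ℝ, 0 < lε ∧ ∀ x : X, ∀ lam : ℝ, lε < lam →
      ∃ (Y : Type u) (dY : Y → Y → ℝ) (y : Y) (d : X ⊕ Y → X ⊕ Y → ℝ),
        IsMetricDist dY ∧
        (∀ δ : ℝ, δ ∈ Set.Ioo (0:ℝ) 1 → ∃ T : Finset Y,
          (T.card : ℝ) ≤ C * (2 / δ) ^ α ∧
          ∀ z : Y, dY z y < 2 → ∃ t ∈ T, dY z t < δ / 2) ∧
        IsCoupling (fun a b : X => lam * dist a b) dY x y ε d) :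
    ∃ R' : ℝ, 0 < R' ∧ ∀ β : ℝ, α < β → ∃ C' : ℝ, 1 < C' ∧
      ∀ x : X, dimAle (fun a b : X => dist a b) (Metric.ball x R') C' R' β := by
  have h : HasUniformlyCoverableTangents X C α := h
  have hC0 : 0 ≤ C := by linarith
  obtain ⟨P₀, hP₀, hcoarse⟩ := h.shrinksBalls (θ := 1 / 2) (by norm_num) (by norm_num)
  refine ⟨P₀, hP₀, fun β hβ => ?_⟩
  obtain ⟨θ, hθ0, hθ1, hMθ⟩ := exists_mul_div_rpow_le_inv_rpow C (by norm_num : (0:ℝ) ≤ 3) hβ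
  obtain ⟨P, hP, hfine⟩ := h.shrinksBalls hθ0 hθ1.le
  obtain ⟨j, hj⟩ := exists_pow_lt_of_lt_one (div_pos hP hP₀) (by norm_num : (1 / 2 : ℝ) < 1)
  have hjP : (1 / 2 : ℝ) ^ (j + 1) * P₀ ≤ P := by
    rw [lt_div_iff₀ hP₀] at hj
    nlinarith [pow_succ (1 / 2 : ℝ) j, pow_pos (by norm_num : (0:ℝ) < 1 / 2) j]
  set N := C * (3 / (1 / 2)) ^ α
  set M := C * (3 / θ) ^ α
  have hN : 0 ≤ N := by positivity
  have hM : 0 ≤ M := by positivity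
  have hcoarse' := hcoarse.pow_succ (by norm_num) (by norm_num) hP₀.le hN j
  refine ⟨max 2 (N ^ (j + 1) * M), one_lt_two.trans_le (le_max_left _ _),
    fun x => dimAle_of_coverableBy fun r R hr hrR hR z _ => ?_⟩
  refine (hcoarse'.coverableBy_rpow hfine (by positivity) (pow_le_one₀ (by norm_num) (by norm_num))
    hjP hθ0 hθ1 (by positivity) hM (hα.trans hβ.le) hMθ hr hrR hR inter_subset_right).mono le_rfl ?_
  exact mul_le_mul_of_nonneg_right (le_max_right _ _) (by have := hr.trans hrR; positivity)
end
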